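/- arXiv:math/0502485 — 5 statements merged into one kernel-verified Lean document; each statement's English description precedes it below -/
import Mathlib

section
/- (Geronimus.) Let μ and ν be two nontrivial probability measures on the unit circle and suppose that for some N₀ ≥ 1 one has Φ_{N₀}(z; dμ) = Φ_{N₀}(z; dν) as polynomials. Then Φ_j(z; dμ) = Φ_j(z; dν) for j = 0, 1, …, N₀ − 1, α_j(dμ) = α_j(dν) for j = 0, 1, …, N₀ − 1, and φ_j(z; dμ) = φ_j(z; dν) for j = 0, 1, …, N₀. -/
open MeasureTheory Polynomial Filter

noncomputable section

/-- A nontrivial probability measure on the unit circle: a probability measure on `ℂ`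
supported on `{z : ‖z‖ = 1}` that is not concentrated on any finite set
(equivalently, its support is infinite). -/
structure IsNontrivialOnCircle (μ : Measure ℂ) : Prop where
  prob : IsProbabilityMeasure μ
  onCircle : μ {z : ℂ | ‖z‖ = 1}ᶜ = 0
  infiniteSupport : ∀ s : Finset ℂ, μ ((↑s : Set ℂ)ᶜ) ≠ 0

/-- `Φ` is the family of monic orthogonal polynomials for `μ`: each `Φ n` is monic of
degree `n` and orthogonal in `L²(∂𝔻, dμ)` to `z^j` for `j = 0, …, n-1`. -/
def IsMonicOPUC (μ : Measure ℂ) (Φ : ℕ → Polynomial ℂ) : Prop :=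
  ∀ n : ℕ, ((Φ n).Monic ∧ (Φ n).natDegree = n) ∧
    ∀ j < n, ∫ z, (starRingEnd ℂ) z ^ j * (Φ n).eval z ∂μ = 0

/-- Verblunsky coefficients: `α n = -conj (Φ (n+1) (0))`. -/
def verblunsky (Φ : ℕ → Polynomial ℂ) (n : ℕ) : ℂ :=
  - (starRingEnd ℂ) ((Φ (n + 1)).eval 0)

/-- Squared `L²(dμ)` norm of a polynomial. -/
def polyNormSq (μ : Measure ℂ) (P : Polynomial ℂ) : ℝ :=
  ∫ z, ‖P.eval z‖ ^ 2 ∂μ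

/-- Orthonormal polynomial: `φ = Φ / ‖Φ‖_{L²(dμ)}`. -/
def orthonormalize (μ : Measure ℂ) (P : Polynomial ℂ) : Polynomial ℂ :=
  Polynomial.C ((Real.sqrt (polyNormSq μ P) : ℂ))⁻¹ * P

/-- The reversed polynomial `P^{*,n}(z) = z^n conj (P (1/conj z))`. -/
def revStar (n : ℕ) (P : Polynomial ℂ) : Polynomial ℂ :=
  ∑ j ∈ Finset.range (n + 1),
    Polynomial.C ((starRingEnd ℂ) (P.coeff (n - j))) * Polynomial.X ^ j

/-!
Szegő's recursion `Φₙ₊₁ = z Φₙ + a Φₙ*` (with `a = Φₙ₊₁(0)`) and the norm identity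
`‖Φₙ₊₁‖² = (1 - |a|²) ‖Φₙ‖²` hold for every nontrivial measure on the circle. Since `‖Φₙ₊₁‖ ≠ 0`,
the norm identity gives `|a| ≠ 1`, so the recursion can be inverted:
`(1 - |a|²) z Φₙ = Φₙ₊₁ - a Φₙ₊₁*`. Thus `Φₙ₊₁` determines `Φₙ`, and downward induction from `N₀`
shows that `μ` and `ν` share `Φ₀, …, Φ_{N₀}`; the norm identity, started from `‖Φ₀‖ = 1`, then
shows they share the norms as well.
-/

open ComplexConjugate

def polyInner (μ : Measure ℂ) (P Q : ℂ[X]) : ℂ :=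
  ∫ z, conj (P.eval z) * Q.eval z ∂μ

theorem mul_conj_self_of_norm_eq_one {z : ℂ} (hz : ‖z‖ = 1) : z * conj z = 1 := by
  rw [Complex.mul_conj', hz, Complex.ofReal_one, one_pow]

section revStar

theorem revStar_coeff (n : ℕ) (P : ℂ[X]) (k : ℕ) :
    (revStar n P).coeff k = if k ≤ n then conj (P.coeff (n - k)) else 0 := by
  simp only [revStar, finsetSum_coeff, coeff_C_mul, coeff_X_pow, mul_ite, mul_one, mul_zero,
    Finset.sum_ite_eq, Finset.mem_range, Nat.lt_succ_iff]

theorem natDegree_revStar_le (n : ℕ) (P : ℂ[X]) : (revStar n P).natDegree ≤ n :=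
  natDegree_le_iff_coeff_eq_zero.2 fun k hk => by rw [revStar_coeff, if_neg (by omega)]

theorem revStar_add (n : ℕ) (P Q : ℂ[X]) : revStar n (P + Q) = revStar n P + revStar n Q := by
  ext k
  simp only [coeff_add, revStar_coeff, map_add]
  split_ifs <;> simp

theorem revStar_C_mul (n : ℕ) (c : ℂ) (P : ℂ[X]) :
    revStar n (C c * P) = C (conj c) * revStar n P := by
  ext k
  simp only [coeff_C_mul, revStar_coeff, map_mul]
  split_ifs <;> simp

theorem revStar_X_pow {n k : ℕ} (hk : k ≤ n) : revStar n (X ^ k : ℂ[X]) = X ^ (n - k) := by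
  ext i
  simp only [revStar_coeff, coeff_X_pow]
  split_ifs <;> simp <;> omega

theorem revStar_X_mul (n : ℕ) (P : ℂ[X]) : revStar (n + 1) (X * P) = revStar n P := by
  ext k
  simp only [revStar_coeff]
  rcases Nat.lt_or_ge n k with h | h
  · rcases Nat.lt_or_ge (n + 1) k with h' | h'
    · rw [if_neg (by omega), if_neg (by omega)]
    · rw [if_pos h', if_neg (by omega), show n + 1 - k = 0 by omega, mul_coeff_zero]
      simp
  · rw [if_pos (by omega), if_pos h, show n + 1 - k = n - k + 1 by omega, coeff_X_mul]

theorem revStar_revStar {n : ℕ} {P : ℂ[X]} (hP : P.natDegree ≤ n) :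
    revStar (n + 1) (revStar n P) = X * P := by
  ext k
  rw [revStar_coeff]
  rcases k with _ | k
  · simp [revStar_coeff, mul_coeff_zero]
  · rw [coeff_X_mul]
    split_ifs with hk
    · rw [revStar_coeff, if_pos (by omega), Complex.conj_conj,
        show n - (n + 1 - (k + 1)) = k by omega]
    · exact (coeff_eq_zero_of_natDegree_lt (by omega)).symm

theorem eval_revStar {z : ℂ} (hz : ‖z‖ = 1) {n : ℕ} {P : ℂ[X]} (hP : P.natDegree ≤ n) :
    (revStar n P).eval z = z ^ n * conj (P.eval z) := by
  rw [revStar, eval_finsetSum, eval_eq_sum_range' (Nat.lt_succ_of_le hP), map_sum, Finset.mul_sum,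
    ← Finset.sum_range_reflect]
  refine Finset.sum_congr rfl fun j hj => ?_
  have hj : j ≤ n := Nat.lt_succ_iff.1 (Finset.mem_range.1 hj)
  have hzn : z ^ n = z ^ (n - j) * z ^ j := by rw [← pow_add, Nat.sub_add_cancel hj]
  have hzz : z ^ j * conj z ^ j = 1 := by
    rw [← mul_pow, mul_conj_self_of_norm_eq_one hz, one_pow]
  simp only [eval_mul, eval_C, eval_pow, eval_X, map_mul, map_pow,
    show n + 1 - 1 - j = n - j by omega, Nat.sub_sub_self hj]
  rw [hzn]
  linear_combination (-conj (P.coeff j) * z ^ (n - j)) * hzz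

end revStar

section polyInner

variable {μ : Measure ℂ}

theorem polyInner_self (P : ℂ[X]) : polyInner μ P P = polyNormSq μ P := by
  rw [polyNormSq, ← integral_complex_ofReal, polyInner]
  congr 1 with z
  rw [mul_comm, Complex.mul_conj, Complex.normSq_eq_norm_sq, Complex.ofReal_pow]

theorem conj_polyInner (P Q : ℂ[X]) : conj (polyInner μ P Q) = polyInner μ Q P := by
  rw [polyInner, polyInner, ← integral_conj]
  congr 1 with z
  rw [map_mul, Complex.conj_conj, mul_comm]

theorem polyInner_congr {P Q P' Q' : ℂ[X]} (hμ : ∀ᵐ z ∂μ, ‖z‖ = 1)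
    (h : ∀ z : ℂ, ‖z‖ = 1 → conj (P.eval z) * Q.eval z = conj (P'.eval z) * Q'.eval z) :
    polyInner μ P Q = polyInner μ P' Q' :=
  integral_congr_ae (hμ.mono h)

theorem polyInner_X_mul_X_mul (hμ : ∀ᵐ z ∂μ, ‖z‖ = 1) (P Q : ℂ[X]) :
    polyInner μ (X * P) (X * Q) = polyInner μ P Q := by
  refine polyInner_congr hμ fun z hz => ?_
  simp only [eval_mul, eval_X, map_mul]
  linear_combination conj (P.eval z) * Q.eval z * mul_conj_self_of_norm_eq_one hz

theorem polyInner_revStar_revStar (hμ : ∀ᵐ z ∂μ, ‖z‖ = 1) {n : ℕ} {P Q : ℂ[X]}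
    (hP : P.natDegree ≤ n) (hQ : Q.natDegree ≤ n) :
    polyInner μ (revStar n P) (revStar n Q) = polyInner μ Q P := by
  refine polyInner_congr hμ fun z hz => ?_
  have hzz : conj z ^ n * z ^ n = 1 := by
    rw [← mul_pow, mul_comm, mul_conj_self_of_norm_eq_one hz, one_pow]
  rw [eval_revStar hz hP, eval_revStar hz hQ, map_mul, map_pow, Complex.conj_conj]
  linear_combination P.eval z * conj (Q.eval z) * hzz

theorem polyInner_C_mul_left (c : ℂ) (P Q : ℂ[X]) :
    polyInner μ (C c * P) Q = conj c * polyInner μ P Q := by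
  simp only [polyInner, eval_mul, eval_C, map_mul, mul_assoc, integral_const_mul]

theorem polyInner_C_mul_right (c : ℂ) (P Q : ℂ[X]) :
    polyInner μ P (C c * Q) = c * polyInner μ P Q := by
  simp only [polyInner, eval_mul, eval_C, mul_left_comm _ c, integral_const_mul]

variable [IsFiniteMeasure μ]

theorem integrable_of_continuous (hμ : ∀ᵐ z ∂μ, ‖z‖ = 1) {E : Type*} [NormedAddCommGroup E]
    {f : ℂ → E} (hf : Continuous f) : Integrable f μ := by
  have hrestrict : μ.restrict (Metric.sphere 0 1) = μ :=
    Measure.restrict_eq_self_of_ae_mem (by simpa using hμ)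
  rw [← hrestrict]
  exact hf.continuousOn.integrableOn_compact (isCompact_sphere 0 1)

theorem integrable_polyInner (hμ : ∀ᵐ z ∂μ, ‖z‖ = 1) (P Q : ℂ[X]) :
    Integrable (fun z => conj (P.eval z) * Q.eval z) μ :=
  integrable_of_continuous hμ ((Complex.continuous_conj.comp P.continuous).mul Q.continuous)

theorem polyInner_add_left (hμ : ∀ᵐ z ∂μ, ‖z‖ = 1) (P P' Q : ℂ[X]) :
    polyInner μ (P + P') Q = polyInner μ P Q + polyInner μ P' Q := by
  simp only [polyInner, eval_add, map_add, add_mul]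
  exact integral_add (integrable_polyInner hμ P Q) (integrable_polyInner hμ P' Q)

theorem polyInner_add_right (hμ : ∀ᵐ z ∂μ, ‖z‖ = 1) (P Q Q' : ℂ[X]) :
    polyInner μ P (Q + Q') = polyInner μ P Q + polyInner μ P Q' := by
  simp only [polyInner, eval_add, mul_add]
  exact integral_add (integrable_polyInner hμ P Q) (integrable_polyInner hμ P Q')

theorem polyInner_sub_right (hμ : ∀ᵐ z ∂μ, ‖z‖ = 1) (P Q Q' : ℂ[X]) :
    polyInner μ P (Q - Q') = polyInner μ P Q - polyInner μ P Q' := by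
  simp only [polyInner, eval_sub, mul_sub]
  exact integral_sub (integrable_polyInner hμ P Q) (integrable_polyInner hμ P Q')

theorem polyInner_sum_left (hμ : ∀ᵐ z ∂μ, ‖z‖ = 1) {ι : Type*} (s : Finset ι) (P : ι → ℂ[X])
    (Q : ℂ[X]) : polyInner μ (∑ i ∈ s, P i) Q = ∑ i ∈ s, polyInner μ (P i) Q := by
  classical
  induction s using Finset.induction_on with
  | empty => simp [polyInner]
  | insert i s hi ih => rw [Finset.sum_insert hi, Finset.sum_insert hi, polyInner_add_left hμ, ih]

theorem polyInner_eq_zero_of_forall_mem_support (hμ : ∀ᵐ z ∂μ, ‖z‖ = 1) {P Q : ℂ[X]}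
    (h : ∀ j ∈ P.support, polyInner μ (X ^ j) Q = 0) : polyInner μ P Q = 0 := by
  rw [P.as_sum_support_C_mul_X_pow, polyInner_sum_left hμ]
  exact Finset.sum_eq_zero fun j hj => by rw [polyInner_C_mul_left, h j hj, mul_zero]

end polyInner

theorem IsNontrivialOnCircle.ae_norm_eq_one {μ : Measure ℂ} (hμ : IsNontrivialOnCircle μ) :
    ∀ᵐ z ∂μ, ‖z‖ = 1 :=
  hμ.onCircle

theorem IsNontrivialOnCircle.eq_zero_of_polyNormSq_eq_zero {μ : Measure ℂ}
    (hμ : IsNontrivialOnCircle μ) {P : ℂ[X]} (h : polyNormSq μ P = 0) : P = 0 := by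
  have := hμ.prob
  by_contra hP
  have hsq : (fun z => ‖P.eval z‖ ^ 2) =ᵐ[μ] 0 :=
    (integral_eq_zero_iff_of_nonneg (fun z => sq_nonneg _)
      (integrable_of_continuous hμ.ae_norm_eq_one (P.continuous.norm.pow 2))).1 h
  have hroots : ∀ᵐ z ∂μ, z ∈ ((P.roots.toFinset : Finset ℂ) : Set ℂ) := by
    filter_upwards [hsq] with z hz
    simpa [hP] using hz
  exact hμ.infiniteSupport _ (ae_iff.1 hroots)

namespace IsMonicOPUC

variable {μ : Measure ℂ} {Φ : ℕ → ℂ[X]}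

theorem isMonicOfDegree (hΦ : IsMonicOPUC μ Φ) (n : ℕ) : IsMonicOfDegree (Φ n) n :=
  ⟨(hΦ n).1.2, (hΦ n).1.1⟩

theorem polyInner_eq_zero_of_natDegree_lt [IsFiniteMeasure μ] (hμ : ∀ᵐ z ∂μ, ‖z‖ = 1)
    (hΦ : IsMonicOPUC μ Φ) {n : ℕ} {Q : ℂ[X]} (hQ : Q.natDegree < n) : polyInner μ Q (Φ n) = 0 :=
  polyInner_eq_zero_of_forall_mem_support hμ fun j hj => by
    simpa [polyInner] using (hΦ n).2 j ((le_natDegree_of_mem_supp j hj).trans_lt hQ)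

theorem polyNormSq_ne_zero (hμ : IsNontrivialOnCircle μ) (hΦ : IsMonicOPUC μ Φ) (n : ℕ) :
    polyNormSq μ (Φ n) ≠ 0 :=
  fun h => (hΦ.isMonicOfDegree n).ne_zero (hμ.eq_zero_of_polyNormSq_eq_zero h)

theorem polyInner_X_pow_revStar [IsFiniteMeasure μ] (hμ : ∀ᵐ z ∂μ, ‖z‖ = 1)
    (hΦ : IsMonicOPUC μ Φ) {n k : ℕ} (hk₀ : k ≠ 0) (hkn : k ≤ n) :
    polyInner μ (X ^ k) (revStar n (Φ n)) = 0 := by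
  have hΦn := (hΦ.isMonicOfDegree n).natDegree_eq
  have hXk : (X ^ k : ℂ[X]) = revStar n (X ^ (n - k)) := by
    rw [revStar_X_pow (Nat.sub_le n k), Nat.sub_sub_self hkn]
  rw [hXk, polyInner_revStar_revStar hμ ((natDegree_X_pow_le _).trans (Nat.sub_le n k)) hΦn.le,
    ← conj_polyInner, hΦ.polyInner_eq_zero_of_natDegree_lt hμ (by rw [natDegree_X_pow]; omega),
    map_zero]

theorem szego_recursion (hμ : IsNontrivialOnCircle μ) (hΦ : IsMonicOPUC μ Φ) (n : ℕ) :
    Φ (n + 1) = X * Φ n + C ((Φ (n + 1)).eval 0) * revStar n (Φ n) := by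
  have := hμ.prob
  have hcirc := hμ.ae_norm_eq_one
  set a := (Φ (n + 1)).eval 0
  set D := Φ (n + 1) - X * Φ n - C a * revStar n (Φ n) with hD
  suffices D = 0 by linear_combination this
  have hdeg : D.natDegree ≤ n := by
    refine (natDegree_sub_le_of_le (Nat.le_of_lt_succ ?_)
      ((natDegree_C_mul_le _ _).trans (natDegree_revStar_le n _))).trans (max_self n).le
    exact (hΦ.isMonicOfDegree (n + 1)).natDegree_sub_lt n.succ_ne_zero
      (by simpa [add_comm] using (isMonicOfDegree_X (R := ℂ)).mul (hΦ.isMonicOfDegree n))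
  have hcoeff : D.coeff 0 = 0 := by
    have hS0 : (revStar n (Φ n)).coeff 0 = 1 := by
      have hlead : (Φ n).coeff n = 1 := by simpa [(hΦ n).1.2] using (hΦ n).1.1.coeff_natDegree
      rw [revStar_coeff, if_pos n.zero_le, Nat.sub_zero, hlead, map_one]
    rw [hD, coeff_sub, coeff_sub, coeff_C_mul, hS0, coeff_X_mul_zero, coeff_zero_eq_eval_zero]
    ring
  -- `D` has no constant term and is orthogonal to `z, …, zⁿ`, hence to itself.
  refine hμ.eq_zero_of_polyNormSq_eq_zero ?_
  rw [← Complex.ofReal_eq_zero, ← polyInner_self]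
  refine polyInner_eq_zero_of_forall_mem_support hcirc fun k hk => ?_
  have hk₀ : k ≠ 0 := by rintro rfl; exact mem_support_iff.1 hk hcoeff
  have hkn : k ≤ n := (le_natDegree_of_mem_supp k hk).trans hdeg
  obtain ⟨j, rfl⟩ := Nat.exists_eq_succ_of_ne_zero hk₀
  rw [hD, polyInner_sub_right hcirc, polyInner_sub_right hcirc, polyInner_C_mul_right,
    hΦ.polyInner_X_pow_revStar hcirc hk₀ hkn,
    hΦ.polyInner_eq_zero_of_natDegree_lt hcirc (by rw [natDegree_X_pow]; omega), pow_succ',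
    polyInner_X_mul_X_mul hcirc,
    hΦ.polyInner_eq_zero_of_natDegree_lt hcirc (by rw [natDegree_X_pow]; omega)]
  ring

theorem polyNormSq_succ (hμ : IsNontrivialOnCircle μ) (hΦ : IsMonicOPUC μ Φ) (n : ℕ) :
    polyNormSq μ (Φ (n + 1)) = (1 - Complex.normSq ((Φ (n + 1)).eval 0)) * polyNormSq μ (Φ n) := by
  have := hμ.prob
  have hcirc := hμ.ae_norm_eq_one
  set a := (Φ (n + 1)).eval 0
  set P := Φ n
  set S := revStar n P
  have hrec : Φ (n + 1) = X * P + C a * S := hΦ.szego_recursion hμ n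
  have hSΦ : polyInner μ S (Φ (n + 1)) = 0 :=
    hΦ.polyInner_eq_zero_of_natDegree_lt hcirc ((natDegree_revStar_le n P).trans_lt n.lt_succ_self)
  have hSS : polyInner μ S S = polyInner μ P P :=
    polyInner_revStar_revStar hcirc (hΦ n).1.2.le (hΦ n).1.2.le
  have hSXP : polyInner μ S (X * P) = -a * polyInner μ P P := by
    rw [hrec, polyInner_add_right hcirc, polyInner_C_mul_right, hSS] at hSΦ
    linear_combination hSΦ
  have hXPS : polyInner μ (X * P) S = -conj a * polyInner μ P P := by
    rw [← conj_polyInner, hSXP, map_mul, map_neg, conj_polyInner]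
  have hnorm : polyInner μ (Φ (n + 1)) (Φ (n + 1)) = (1 - a * conj a) * polyInner μ P P :=
    calc polyInner μ (Φ (n + 1)) (Φ (n + 1))
        = polyInner μ (X * P) (Φ (n + 1)) + conj a * polyInner μ S (Φ (n + 1)) := by
          nth_rw 1 [hrec]; rw [polyInner_add_left hcirc, polyInner_C_mul_left]
      _ = polyInner μ (X * P) (X * P) + a * polyInner μ (X * P) S := by
          rw [hSΦ, hrec, polyInner_add_right hcirc, polyInner_C_mul_right, mul_zero, add_zero]
      _ = (1 - a * conj a) * polyInner μ P P := by
          rw [polyInner_X_mul_X_mul hcirc, hXPS]; ring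
  rw [polyInner_self, polyInner_self, Complex.mul_conj] at hnorm
  exact_mod_cast hnorm

theorem one_sub_normSq_ne_zero (hμ : IsNontrivialOnCircle μ) (hΦ : IsMonicOPUC μ Φ) (n : ℕ) :
    1 - Complex.normSq ((Φ (n + 1)).eval 0) ≠ 0 := fun h =>
  hΦ.polyNormSq_ne_zero hμ (n + 1) (by rw [hΦ.polyNormSq_succ hμ, h, zero_mul])

theorem inverse_szego_recursion (hμ : IsNontrivialOnCircle μ) (hΦ : IsMonicOPUC μ Φ) (n : ℕ) :
    C (1 - (Complex.normSq ((Φ (n + 1)).eval 0) : ℂ)) * (X * Φ n) =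
      Φ (n + 1) - C ((Φ (n + 1)).eval 0) * revStar (n + 1) (Φ (n + 1)) := by
  set a := (Φ (n + 1)).eval 0
  have hrec : Φ (n + 1) = X * Φ n + C a * revStar n (Φ n) := hΦ.szego_recursion hμ n
  have hrev : revStar (n + 1) (Φ (n + 1)) = revStar n (Φ n) + C (conj a) * (X * Φ n) := by
    rw [hrec, revStar_add, revStar_X_mul, revStar_C_mul, revStar_revStar (hΦ n).1.2.le]
  rw [hrev, ← Complex.mul_conj, C_sub, C_mul, C_1]
  linear_combination -hrec

end IsMonicOPUC

theorem IsMonicOPUC.eq_of_succ_eq {μ ν : Measure ℂ} (hμ : IsNontrivialOnCircle μ)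
    (hν : IsNontrivialOnCircle ν) {Φμ Φν : ℕ → ℂ[X]} (hΦμ : IsMonicOPUC μ Φμ)
    (hΦν : IsMonicOPUC ν Φν) {n : ℕ} (h : Φμ (n + 1) = Φν (n + 1)) : Φμ n = Φν n := by
  have hμrec := hΦμ.inverse_szego_recursion hμ n
  rw [h] at hμrec
  refine mul_left_cancel₀ X_ne_zero (mul_left_cancel₀ (C_ne_zero.2 ?_)
    (hμrec.trans (hΦν.inverse_szego_recursion hν n).symm))
  exact_mod_cast hΦν.one_sub_normSq_ne_zero hν n

theorem polyNormSq_one {μ : Measure ℂ} [IsProbabilityMeasure μ] : polyNormSq μ 1 = 1 := by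
  simp [polyNormSq]

theorem IsMonicOPUC.polyNormSq_eq_of_eq {μ ν : Measure ℂ} (hμ : IsNontrivialOnCircle μ)
    (hν : IsNontrivialOnCircle ν) {Φμ Φν : ℕ → ℂ[X]} (hΦμ : IsMonicOPUC μ Φμ)
    (hΦν : IsMonicOPUC ν Φν) {N : ℕ} (h : ∀ j ≤ N, Φμ j = Φν j) :
    ∀ j ≤ N, polyNormSq μ (Φμ j) = polyNormSq ν (Φν j)
  | 0, _ => by
    have := hμ.prob
    have := hν.prob
    rw [isMonicOfDegree_zero_iff.1 (hΦμ.isMonicOfDegree 0),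
      isMonicOfDegree_zero_iff.1 (hΦν.isMonicOfDegree 0), polyNormSq_one, polyNormSq_one]
  | j + 1, hj => by
    rw [hΦμ.polyNormSq_succ hμ, hΦν.polyNormSq_succ hν, h (j + 1) hj,
      hΦμ.polyNormSq_eq_of_eq hμ hν hΦν h j (by omega)]

theorem stmt3_general (μ ν : Measure ℂ) (hμ : IsNontrivialOnCircle μ) (hν : IsNontrivialOnCircle ν)
    (Φμ Φν : ℕ → Polynomial ℂ) (hΦμ : IsMonicOPUC μ Φμ) (hΦν : IsMonicOPUC ν Φν)
    (N₀ : ℕ) (heq : Φμ N₀ = Φν N₀) :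
    (∀ j < N₀, Φμ j = Φν j) ∧
    (∀ j < N₀, verblunsky Φμ j = verblunsky Φν j) ∧
    (∀ j ≤ N₀, orthonormalize μ (Φμ j) = orthonormalize ν (Φν j)) := by
  have hΦ : ∀ j ≤ N₀, Φμ j = Φν j := fun j hj =>
    Nat.decreasingInduction (fun _ _ h => hΦμ.eq_of_succ_eq hμ hν hΦν h) heq hj
  refine ⟨fun j hj => hΦ j hj.le, fun j hj => ?_, fun j hj => ?_⟩
  · rw [verblunsky, verblunsky, hΦ (j + 1) hj]
  · rw [orthonormalize, orthonormalize, hΦμ.polyNormSq_eq_of_eq hμ hν hΦν hΦ j hj, hΦ j hj]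

/-- Geronimus: if `Φ_{N₀}(·; dμ) = Φ_{N₀}(·; dν)` then the monic orthogonal
polynomials, Verblunsky coefficients (for `j < N₀`), and orthonormal polynomials
(for `j ≤ N₀`) of `μ` and `ν` agree. -/
theorem stmt3 (μ ν : Measure ℂ) (hμ : IsNontrivialOnCircle μ) (hν : IsNontrivialOnCircle ν)
    (Φμ Φν : ℕ → Polynomial ℂ) (hΦμ : IsMonicOPUC μ Φμ) (hΦν : IsMonicOPUC ν Φν)
    (N₀ : ℕ) (hN₀ : 1 ≤ N₀) (heq : Φμ N₀ = Φν N₀) :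
    (∀ j < N₀, Φμ j = Φν j) ∧
    (∀ j < N₀, verblunsky Φμ j = verblunsky Φν j) ∧
    (∀ j ≤ N₀, orthonormalize μ (Φμ j) = orthonormalize ν (Φν j)) :=
  stmt3_general μ ν hμ hν Φμ Φν hΦμ hΦν N₀ heq

end
end

section
/- Let μ be a nontrivial probability measure on the unit circle with orthonormal polynomials φ_n. Then for every z₀ ∈ 𝔻 and every n ≥ 0, |φ_n^*(z₀)| ≥ (1 − |z₀|²)^{1/2}. -/
open MeasureTheory Polynomial Filter

noncomputable section

/-! The Szegő recursion `Φₙ₊₁ = X Φₙ - ᾱₙ Φₙ^*` reverses to `Φₙ₊₁^* = Φₙ^* - αₙ X Φₙ`, and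
Pythagoras applied to `X Φₙ = Φₙ₊₁ + ᾱₙ Φₙ^*` gives `‖Φₙ₊₁‖² = (1 - |αₙ|²) ‖Φₙ‖²`. Writing
`a = Φₙ(z)`, `b = Φₙ^*(z)`, the identity
`|b - α z a|² - |z a - ᾱ b|² = (1 - |α|²) (|b|² - |z|² |a|²)` then propagates
`|Φₙ^*(z)|² - |z|² |Φₙ(z)|² ≥ (1 - |z|²) ‖Φₙ‖²` (for `|z| ≤ 1`) from `n = 0` to all `n`.
Dropping `|z|² |Φₙ(z)|²` and dividing by `‖Φₙ‖²` gives the bound for `φₙ^* = Φₙ^* / ‖Φₙ‖`. -/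

namespace OPUC

open ComplexConjugate

variable {μ : Measure ℂ}

theorem conj_mul_self_of_norm_eq_one {z : ℂ} (hz : ‖z‖ = 1) : conj z * z = 1 := by
  rw [Complex.conj_mul', hz]; norm_num

theorem conj_pow_mul_pow_of_norm_eq_one (n : ℕ) {z : ℂ} (hz : ‖z‖ = 1) :
    conj z ^ n * z ^ n = 1 := by
  rw [← mul_pow, conj_mul_self_of_norm_eq_one hz, one_pow]

section revStar

variable {n : ℕ} {P : ℂ[X]}

theorem coeff_revStar (n : ℕ) (P : ℂ[X]) (k : ℕ) :
    (revStar n P).coeff k = if k ≤ n then conj (P.coeff (n - k)) else 0 := by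
  simp only [revStar, finsetSum_coeff, coeff_C_mul, coeff_X_pow, mul_ite, mul_one, mul_zero,
    Finset.sum_ite_eq, Finset.mem_range, Nat.lt_succ_iff]

theorem coeff_zero_revStar (n : ℕ) (P : ℂ[X]) : (revStar n P).coeff 0 = conj (P.coeff n) := by
  simp [coeff_revStar]

theorem natDegree_revStar_le (n : ℕ) (P : ℂ[X]) : (revStar n P).natDegree ≤ n :=
  natDegree_le_iff_coeff_eq_zero.mpr fun m hm => by simp [coeff_revStar, Nat.not_le.mpr hm]

theorem revStar_C_mul (n : ℕ) (c : ℂ) (P : ℂ[X]) :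
    revStar n (C c * P) = C (conj c) * revStar n P := by
  ext k
  simp only [coeff_revStar, coeff_C_mul, map_mul, mul_ite, mul_zero]

theorem revStar_sub (n : ℕ) (P Q : ℂ[X]) : revStar n (P - Q) = revStar n P - revStar n Q := by
  ext k
  simp only [coeff_revStar, coeff_sub, map_sub]
  split_ifs <;> simp

theorem revStar_X_pow {m : ℕ} (hm : m ≤ n) : revStar n (X ^ m : ℂ[X]) = X ^ (n - m) := by
  ext k
  simp only [coeff_revStar, coeff_X_pow]
  split_ifs <;> simp <;> omega

theorem revStar_X_mul (n : ℕ) (P : ℂ[X]) : revStar (n + 1) (X * P) = revStar n P := by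
  ext k
  simp only [coeff_revStar]
  obtain hk | rfl | hk : k ≤ n ∨ k = n + 1 ∨ n + 1 < k := by omega
  · rw [if_pos (by omega), if_pos hk, show n + 1 - k = n - k + 1 by omega, coeff_X_mul]
  · simp
  · rw [if_neg (by omega), if_neg (by omega)]

theorem revStar_succ_revStar (hP : P.natDegree ≤ n) : revStar (n + 1) (revStar n P) = X * P := by
  ext k
  rcases k with _ | k
  · simp [coeff_revStar]
  · rw [coeff_X_mul, coeff_revStar, coeff_revStar]
    split_ifs with h₁ h₂
    · rw [show n - (n + 1 - (k + 1)) = k by omega, Complex.conj_conj]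
    · omega
    · exact (coeff_eq_zero_of_natDegree_lt (by omega)).symm

theorem eval_revStar_of_norm_eq_one (hP : P.natDegree ≤ n) {z : ℂ} (hz : ‖z‖ = 1) :
    (revStar n P).eval z = z ^ n * conj (P.eval z) := by
  rw [eval_eq_sum_range' (Nat.lt_succ_of_le hP), map_sum, Finset.mul_sum, revStar,
    eval_finsetSum, ← Finset.sum_range_reflect (fun j => z ^ n * conj (P.coeff j * z ^ j))]
  refine Finset.sum_congr rfl fun j hj => ?_
  have hj : j ≤ n := Nat.lt_succ_iff.mp (Finset.mem_range.mp hj)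
  simp only [Nat.succ_sub_one, eval_mul, eval_C, eval_pow, eval_X, map_mul, map_pow]
  obtain ⟨k, rfl⟩ := Nat.exists_eq_add_of_le hj
  rw [Nat.add_sub_cancel_left, pow_add]
  linear_combination (-conj (P.coeff k) * z ^ j) * conj_pow_mul_pow_of_norm_eq_one k hz

end revStar

def polyInner (μ : Measure ℂ) (P Q : ℂ[X]) : ℂ :=
  ∫ z, conj (P.eval z) * Q.eval z ∂μ

theorem integrable_of_continuous [IsFiniteMeasure μ] (hμ : ∀ᵐ z ∂μ, ‖z‖ = 1) {f : ℂ → ℂ}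
    (hf : Continuous f) : Integrable f μ := by
  rw [← Measure.restrict_eq_self_of_ae_mem (s := Metric.sphere 0 1) (μ := μ) (by simpa using hμ)]
  exact hf.continuousOn.integrableOn_compact (isCompact_sphere 0 1)

theorem integrable_conj_eval_mul_eval [IsFiniteMeasure μ] (hμ : ∀ᵐ z ∂μ, ‖z‖ = 1)
    (P Q : ℂ[X]) : Integrable (fun z => conj (P.eval z) * Q.eval z) μ :=
  integrable_of_continuous hμ
    ((Complex.continuous_conj.comp P.continuous_aeval).mul Q.continuous_aeval)

theorem polyInner_add_right [IsFiniteMeasure μ] (hμ : ∀ᵐ z ∂μ, ‖z‖ = 1) (P Q R : ℂ[X]) :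
    polyInner μ P (Q + R) = polyInner μ P Q + polyInner μ P R := by
  simp only [polyInner, eval_add, mul_add]
  exact integral_add (integrable_conj_eval_mul_eval hμ P Q) (integrable_conj_eval_mul_eval hμ P R)

theorem polyInner_sub_right [IsFiniteMeasure μ] (hμ : ∀ᵐ z ∂μ, ‖z‖ = 1) (P Q R : ℂ[X]) :
    polyInner μ P (Q - R) = polyInner μ P Q - polyInner μ P R := by
  simp only [polyInner, eval_sub, mul_sub]
  exact integral_sub (integrable_conj_eval_mul_eval hμ P Q) (integrable_conj_eval_mul_eval hμ P R)

theorem polyInner_C_mul_right (c : ℂ) (P Q : ℂ[X]) :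
    polyInner μ P (C c * Q) = c * polyInner μ P Q := by
  simp only [polyInner, eval_mul, eval_C, ← integral_const_mul, mul_left_comm]

theorem conj_polyInner (P Q : ℂ[X]) : conj (polyInner μ P Q) = polyInner μ Q P := by
  simp only [polyInner, ← integral_conj, map_mul, Complex.conj_conj, mul_comm]

theorem polyInner_add_left [IsFiniteMeasure μ] (hμ : ∀ᵐ z ∂μ, ‖z‖ = 1) (P Q R : ℂ[X]) :
    polyInner μ (P + Q) R = polyInner μ P R + polyInner μ Q R := by
  rw [← conj_polyInner, polyInner_add_right hμ, map_add, conj_polyInner, conj_polyInner]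

theorem polyInner_C_mul_left (c : ℂ) (P Q : ℂ[X]) :
    polyInner μ (C c * P) Q = conj c * polyInner μ P Q := by
  rw [← conj_polyInner, polyInner_C_mul_right, map_mul, conj_polyInner]

theorem polyInner_self (P : ℂ[X]) : polyInner μ P P = polyNormSq μ P := by
  simp only [polyInner, polyNormSq, ← integral_complex_ofReal, Complex.ofReal_pow,
    Complex.conj_mul']

theorem polyInner_eq_sum [IsFiniteMeasure μ] (hμ : ∀ᵐ z ∂μ, ‖z‖ = 1) (P Q : ℂ[X]) :
    polyInner μ P Q =
      ∑ j ∈ Finset.range (P.natDegree + 1), conj (P.coeff j) * polyInner μ (X ^ j) Q := by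
  conv_lhs => rw [P.as_sum_range_C_mul_X_pow]
  induction (Finset.range (P.natDegree + 1)) using Finset.induction_on with
  | empty => simp [polyInner]
  | insert j s hj ih =>
    rw [Finset.sum_insert hj, Finset.sum_insert hj, polyInner_add_left hμ, polyInner_C_mul_left,
      ih]

theorem polyInner_X_mul_X_mul (hμ : ∀ᵐ z ∂μ, ‖z‖ = 1) (P Q : ℂ[X]) :
    polyInner μ (X * P) (X * Q) = polyInner μ P Q := by
  refine integral_congr_ae ?_
  filter_upwards [hμ] with z hz
  simp only [eval_mul, eval_X, map_mul]
  linear_combination (conj (P.eval z) * Q.eval z) * conj_mul_self_of_norm_eq_one hz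

theorem polyInner_revStar_revStar (hμ : ∀ᵐ z ∂μ, ‖z‖ = 1) {n : ℕ} {P Q : ℂ[X]}
    (hP : P.natDegree ≤ n) (hQ : Q.natDegree ≤ n) :
    polyInner μ (revStar n P) (revStar n Q) = polyInner μ Q P := by
  refine integral_congr_ae ?_
  filter_upwards [hμ] with z hz
  simp only [eval_revStar_of_norm_eq_one hP hz, eval_revStar_of_norm_eq_one hQ hz, map_mul,
    map_pow, Complex.conj_conj]
  linear_combination (P.eval z * conj (Q.eval z)) * conj_pow_mul_pow_of_norm_eq_one n hz

theorem _root_.IsNontrivialOnCircle.ae_norm_eq_one_s5 (hμ : IsNontrivialOnCircle μ) :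
    ∀ᵐ z ∂μ, ‖z‖ = 1 :=
  ae_iff.mpr hμ.onCircle

theorem eq_zero_of_polyNormSq_eq_zero (hμ : IsNontrivialOnCircle μ) {P : ℂ[X]}
    (h : polyNormSq μ P = 0) : P = 0 := by
  have := hμ.prob
  by_contra hP
  have hint : Integrable (fun z => ‖P.eval z‖ ^ 2) μ :=
    integrable_of_continuous hμ.ae_norm_eq_one_s5 (f := fun z => ((‖P.eval z‖ ^ 2 : ℝ) : ℂ))
      (by fun_prop) |>.re
  have hvanish : ∀ᵐ z ∂μ, P.eval z = 0 := by
    filter_upwards [(integral_eq_zero_iff_of_nonneg (fun z => by positivity) hint).mp h]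
      with z hz
    simpa using hz
  have hnull : μ {z | ¬P.eval z = 0} = 0 := ae_iff.mp hvanish
  have hroots : (↑P.roots.toFinset : Set ℂ)ᶜ ⊆ {z | ¬P.eval z = 0} := fun z hz hPz =>
    hz (by simpa [hP] using hPz)
  exact hμ.infiniteSupport _ (measure_mono_null hroots hnull)

theorem polyNormSq_pos (hμ : IsNontrivialOnCircle μ) {P : ℂ[X]} (hP : P ≠ 0) :
    0 < polyNormSq μ P :=
  (integral_nonneg fun _ => by positivity).lt_of_ne' (mt (eq_zero_of_polyNormSq_eq_zero hμ) hP)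

theorem eq_zero_of_polyInner_X_pow_eq_zero (hμ : IsNontrivialOnCircle μ) {P : ℂ[X]}
    (h : ∀ j ≤ P.natDegree, polyInner μ (X ^ j) P = 0) : P = 0 := by
  have := hμ.prob
  refine eq_zero_of_polyNormSq_eq_zero hμ (Complex.ofReal_injective ?_)
  rw [← polyInner_self, polyInner_eq_sum hμ.ae_norm_eq_one_s5, Complex.ofReal_zero]
  refine Finset.sum_eq_zero fun j hj => ?_
  rw [h j (Nat.lt_succ_iff.mp (Finset.mem_range.mp hj)), mul_zero]

/-- `S = X T`, and since multiplication by `X` is an isometry on the circle, `T` is orthogonal to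
`1, …, X^(n-1)`, which span the polynomials of its degree. -/
theorem eq_zero_of_polyInner_X_pow_succ_eq_zero (hμ : IsNontrivialOnCircle μ) {n : ℕ}
    {S : ℂ[X]} (h0 : S.coeff 0 = 0) (hdeg : S.natDegree ≤ n)
    (h : ∀ j < n, polyInner μ (X ^ (j + 1)) S = 0) : S = 0 := by
  obtain ⟨T, rfl⟩ := X_dvd_iff.mpr h0
  by_cases hT : T = 0
  · rw [hT, mul_zero]
  rw [natDegree_X_mul hT] at hdeg
  refine absurd (eq_zero_of_polyInner_X_pow_eq_zero hμ fun j hj => ?_) hT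
  rw [← polyInner_X_mul_X_mul hμ.ae_norm_eq_one_s5, ← pow_succ']
  exact h j (by omega)

variable {Φ : ℕ → ℂ[X]}

theorem _root_.IsMonicOPUC.isMonicOfDegree_s5 (hΦ : IsMonicOPUC μ Φ) (n : ℕ) :
    IsMonicOfDegree (Φ n) n :=
  ⟨(hΦ n).1.2, (hΦ n).1.1⟩

theorem polyInner_eq_zero_of_natDegree_lt [IsFiniteMeasure μ] (hμ : ∀ᵐ z ∂μ, ‖z‖ = 1)
    (hΦ : IsMonicOPUC μ Φ) {n : ℕ} {P : ℂ[X]} (hP : P.natDegree < n) :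
    polyInner μ P (Φ n) = 0 := by
  rw [polyInner_eq_sum hμ]
  refine Finset.sum_eq_zero fun j hj => ?_
  have hj : j < n := lt_of_le_of_lt (Nat.lt_succ_iff.mp (Finset.mem_range.mp hj)) hP
  simp only [polyInner, eval_pow, eval_X, map_pow, (hΦ n).2 j hj, mul_zero]

theorem szego_recursion (hμ : IsNontrivialOnCircle μ) (hΦ : IsMonicOPUC μ Φ) (n : ℕ) :
    Φ (n + 1) = X * Φ n - C (conj (verblunsky Φ n)) * revStar n (Φ n) := by
  have := hμ.prob
  have hcirc := hμ.ae_norm_eq_one_s5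
  have hΦn := hΦ.isMonicOfDegree_s5 n
  have hXΦn : IsMonicOfDegree (X * Φ n) (n + 1) := by
    rw [add_comm]; exact (isMonicOfDegree_X (R := ℂ)).mul hΦn
  rw [← sub_eq_zero]
  refine eq_zero_of_polyInner_X_pow_succ_eq_zero hμ (n := n) ?_ ?_ fun j hj => ?_
  · have hlead : (Φ n).coeff n = 1 := by
      simpa [hΦn.natDegree_eq] using hΦn.monic.coeff_natDegree
    rw [coeff_sub, coeff_sub, coeff_C_mul, coeff_zero_revStar, hlead, coeff_X_mul_zero]
    simp [verblunsky, coeff_zero_eq_eval_zero]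
  · rw [sub_sub_eq_add_sub, add_sub_right_comm]
    refine natDegree_add_le_of_degree_le ?_ ?_
    · exact Nat.le_of_lt_succ
        ((hΦ.isMonicOfDegree_s5 (n + 1)).natDegree_sub_lt n.succ_ne_zero hXΦn)
    · exact (natDegree_C_mul_le _ _).trans (natDegree_revStar_le n _)
  · have hΦ_succ : polyInner μ (X ^ (j + 1)) (Φ (n + 1)) = 0 :=
      polyInner_eq_zero_of_natDegree_lt hcirc hΦ (by rw [natDegree_X_pow]; omega)
    have hXΦ : polyInner μ (X ^ (j + 1)) (X * Φ n) = 0 := by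
      rw [pow_succ', polyInner_X_mul_X_mul hcirc]
      exact polyInner_eq_zero_of_natDegree_lt hcirc hΦ (by rw [natDegree_X_pow]; omega)
    have hΦstar : polyInner μ (X ^ (j + 1)) (revStar n (Φ n)) = 0 := by
      -- `revStar n` is an isometry exchanging `X^(j+1)` and `X^(n-(j+1))`.
      have hX : (X : ℂ[X]) ^ (j + 1) = revStar n (X ^ (n - (j + 1))) := by
        rw [revStar_X_pow (by omega), Nat.sub_sub_self (by omega)]
      rw [hX, polyInner_revStar_revStar hcirc (by rw [natDegree_X_pow]; omega)
        hΦn.natDegree_eq.le, ← conj_polyInner,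
        polyInner_eq_zero_of_natDegree_lt hcirc hΦ (by rw [natDegree_X_pow]; omega), map_zero]
    rw [polyInner_sub_right hcirc, polyInner_sub_right hcirc, polyInner_C_mul_right, hΦ_succ,
      hXΦ, hΦstar]
    ring

theorem polyNormSq_succ (hμ : IsNontrivialOnCircle μ) (hΦ : IsMonicOPUC μ Φ) (n : ℕ) :
    polyNormSq μ (Φ (n + 1)) = (1 - ‖verblunsky Φ n‖ ^ 2) * polyNormSq μ (Φ n) := by
  have := hμ.prob
  have hcirc := hμ.ae_norm_eq_one_s5
  have hdeg : (Φ n).natDegree ≤ n := (hΦ.isMonicOfDegree_s5 n).natDegree_eq.le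
  set α := verblunsky Φ n
  set B := revStar n (Φ n)
  have hXΦ : X * Φ n = Φ (n + 1) + C (conj α) * B := by rw [szego_recursion hμ hΦ n]; ring
  have horth : polyInner μ B (Φ (n + 1)) = 0 :=
    polyInner_eq_zero_of_natDegree_lt hcirc hΦ ((natDegree_revStar_le n _).trans_lt n.lt_succ_self)
  have horth' : polyInner μ (Φ (n + 1)) B = 0 := by rw [← conj_polyInner, horth, map_zero]
  have hB : polyInner μ B B = polyNormSq μ (Φ n) := by
    rw [polyInner_revStar_revStar hcirc hdeg hdeg, polyInner_self]
  -- Pythagoras for the orthogonal decomposition `X Φₙ = Φₙ₊₁ + ᾱ Φₙ^*`, with `‖X Φₙ‖ = ‖Φₙ‖`.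
  have hpyth : polyInner μ (X * Φ n) (X * Φ n) =
      polyInner μ (Φ (n + 1)) (Φ (n + 1)) + conj α * α * polyInner μ B B := by
    simp only [hXΦ, polyInner_add_left hcirc, polyInner_add_right hcirc, polyInner_C_mul_left,
      polyInner_C_mul_right, horth, horth', Complex.conj_conj]
    ring
  rw [polyInner_X_mul_X_mul hcirc, hB, polyInner_self, polyInner_self, Complex.conj_mul'] at hpyth
  norm_cast at hpyth
  linarith

theorem revStar_succ (hμ : IsNontrivialOnCircle μ) (hΦ : IsMonicOPUC μ Φ) (n : ℕ) :
    revStar (n + 1) (Φ (n + 1)) = revStar n (Φ n) - C (verblunsky Φ n) * (X * Φ n) := by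
  rw [szego_recursion hμ hΦ n, revStar_sub, revStar_X_mul, revStar_C_mul, Complex.conj_conj,
    revStar_succ_revStar (hΦ.isMonicOfDegree_s5 n).natDegree_eq.le]

theorem norm_sub_mul_sq_sub_norm_sub_mul_sq (a b z α : ℂ) :
    ‖b - α * (z * a)‖ ^ 2 - ‖z * a - conj α * b‖ ^ 2 =
      (1 - ‖α‖ ^ 2) * (‖b‖ ^ 2 - ‖z‖ ^ 2 * ‖a‖ ^ 2) := by
  simp only [Complex.sq_norm, Complex.normSq_apply, Complex.sub_re, Complex.sub_im,
    Complex.mul_re, Complex.mul_im, Complex.conj_re, Complex.conj_im]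
  ring

theorem one_sub_norm_sq_mul_polyNormSq_le (hμ : IsNontrivialOnCircle μ) (hΦ : IsMonicOPUC μ Φ)
    {z : ℂ} (hz : ‖z‖ ≤ 1) (n : ℕ) :
    (1 - ‖z‖ ^ 2) * polyNormSq μ (Φ n) ≤
      ‖(revStar n (Φ n)).eval z‖ ^ 2 - ‖z‖ ^ 2 * ‖(Φ n).eval z‖ ^ 2 := by
  induction n with
  | zero =>
    have := hμ.prob
    have hΦ0 : Φ 0 = 1 := isMonicOfDegree_zero_iff.mp (hΦ.isMonicOfDegree_s5 0)
    simp [hΦ0, revStar, polyNormSq]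
  | succ n ih =>
    set α := verblunsky Φ n
    set a := (Φ n).eval z
    set b := (revStar n (Φ n)).eval z
    have ha : (Φ (n + 1)).eval z = z * a - conj α * b := by
      simp [szego_recursion hμ hΦ n, a, b, α]
    have hb : (revStar (n + 1) (Φ (n + 1))).eval z = b - α * (z * a) := by
      simp [revStar_succ hμ hΦ n, a, b, α]
    have hα : 0 ≤ 1 - ‖α‖ ^ 2 := by
      refine nonneg_of_mul_nonneg_left ?_ (polyNormSq_pos hμ (hΦ.isMonicOfDegree_s5 n).monic.ne_zero)
      rw [← polyNormSq_succ hμ hΦ n]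
      exact integral_nonneg fun _ => by positivity
    have hz2 : 0 ≤ 1 - ‖z‖ ^ 2 := by nlinarith [norm_nonneg z]
    rw [ha, hb, polyNormSq_succ hμ hΦ n]
    nlinarith [norm_sub_mul_sq_sub_norm_sub_mul_sq a b z α, mul_le_mul_of_nonneg_left ih hα,
      mul_nonneg hz2 (sq_nonneg ‖z * a - conj α * b‖)]

theorem norm_eval_revStar_orthonormalize (n : ℕ) (P : ℂ[X]) (z : ℂ) :
    ‖(revStar n (orthonormalize μ P)).eval z‖ =
      ‖(revStar n P).eval z‖ / √(polyNormSq μ P) := by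
  rw [orthonormalize, revStar_C_mul, eval_mul, eval_C, norm_mul, map_inv₀, Complex.conj_ofReal,
    norm_inv, Complex.norm_real, Real.norm_of_nonneg (Real.sqrt_nonneg _), inv_mul_eq_div]

end OPUC

/-- for `z₀ ∈ 𝔻` and all `n`, `|φ_n^*(z₀)| ≥ (1 − |z₀|²)^{1/2}`. -/
theorem stmt5 (μ : Measure ℂ) (hμ : IsNontrivialOnCircle μ)
    (Φ : ℕ → Polynomial ℂ) (hΦ : IsMonicOPUC μ Φ) :
    ∀ z₀ : ℂ, ‖z₀‖ < 1 → ∀ n : ℕ,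
      Real.sqrt (1 - ‖z₀‖ ^ 2) ≤ ‖(revStar n (orthonormalize μ (Φ n))).eval z₀‖ := by
  intro z₀ hz₀ n
  have hw := OPUC.polyNormSq_pos hμ (hΦ.isMonicOfDegree_s5 n).monic.ne_zero
  have hsq : (1 - ‖z₀‖ ^ 2) * polyNormSq μ (Φ n) ≤ ‖(revStar n (Φ n)).eval z₀‖ ^ 2 :=
    (OPUC.one_sub_norm_sq_mul_polyNormSq_le hμ hΦ hz₀.le n).trans (sub_le_self _ (by positivity))
  rw [OPUC.norm_eval_revStar_orthonormalize, le_div_iff₀ (Real.sqrt_pos.mpr hw),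
    ← Real.sqrt_mul' _ hw.le]
  exact (Real.sqrt_le_sqrt hsq).trans_eq (Real.sqrt_sq (norm_nonneg _))
end
end

section
/- Let f and g be Schur functions whose Schur algorithms do not terminate (i.e., no Schur iterate is a unimodular constant), with Schur parameter sequences (γ_n(f)) and (γ_n(g)) in 𝔻^∞. If γ_n(f) = γ_n(g) for all n ≥ 0, then f = g on 𝔻. Conversely, for every sequence (γ_n)_{n=0}^∞ with γ_n ∈ 𝔻 there exists a Schur function f with γ_n(f) = γ_n for all n. -/
/-!
The pseudo-hyperbolic distance `ρ(u, v) = |u - v| / |1 - ū v|` is invariant under the Möbius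
maps `w ↦ (γ + w) / (1 + γ̄ w)`, and for fixed `z ∈ 𝔻` multiplication by `z` contracts it on the
closed disk by the factor `k = 2|z| / (1 + |z|²) < 1`. Hence one step of the inverse Schur
algorithm, `w ↦ (γ + z w) / (1 + γ̄ z w)`, is a `k`-contraction. Unrolling `N` steps, two Schur
functions with the same parameters satisfy `ρ(f z, g z) ≤ k ^ N` for all `N`, so they agree.
Conversely, the finite continued fractions with tail `0` built from a parameter sequence converge
geometrically, locally uniformly on `𝔻`; their limits are holomorphic, satisfy the Schur
recursion, and have the prescribed parameters.
-/

open MeasureTheory Polynomial Filter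

noncomputable section

/-- A Schur function: analytic on the open unit disk with values in the closed unit disk. -/
def IsSchur (f : ℂ → ℂ) : Prop :=
  DifferentiableOn ℂ f (Metric.ball 0 1) ∧ ∀ z ∈ Metric.ball (0:ℂ) 1, ‖f z‖ ≤ 1

/-- A full (non-terminating) sequence of Schur iterates: `fs 0` is the original Schur
function, each `fs n` is a Schur function with Schur parameter `γ_n = fs n 0 ∈ 𝔻`, and
the Schur algorithm relates consecutive iterates. -/
def SchurIterates (fs : ℕ → ℂ → ℂ) : Prop :=
  (∀ n, IsSchur (fs n)) ∧ (∀ n, ‖fs n 0‖ < 1) ∧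
    ∀ n, ∀ z ∈ Metric.ball (0:ℂ) 1,
      fs n z = (fs n 0 + z * fs (n + 1) z) / (1 + (starRingEnd ℂ) (fs n 0) * z * fs (n + 1) z)

open ComplexConjugate Topology

namespace Schur

lemma norm_mul_le_one {z w : ℂ} (hz : ‖z‖ ≤ 1) (hw : ‖w‖ ≤ 1) : ‖z * w‖ ≤ 1 := by
  rw [norm_mul]; exact mul_le_one₀ hz (norm_nonneg w) hw

lemma norm_one_sub_conj_mul_sq_sub_norm_sub_sq (u v : ℂ) :
    ‖1 - conj u * v‖ ^ 2 - ‖u - v‖ ^ 2 = (1 - ‖u‖ ^ 2) * (1 - ‖v‖ ^ 2) := by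
  simp only [Complex.sq_norm, Complex.normSq_apply, Complex.sub_re, Complex.sub_im,
    Complex.mul_re, Complex.mul_im, Complex.conj_re, Complex.conj_im, Complex.one_re,
    Complex.one_im]
  ring

lemma norm_sub_le_norm_one_sub_conj_mul {u v : ℂ} (hu : ‖u‖ ≤ 1) (hv : ‖v‖ ≤ 1) :
    ‖u - v‖ ≤ ‖1 - conj u * v‖ := by
  have hprod : 0 ≤ (1 - ‖u‖ ^ 2) * (1 - ‖v‖ ^ 2) :=
    mul_nonneg (by nlinarith [norm_nonneg u]) (by nlinarith [norm_nonneg v])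
  rw [← sq_le_sq₀ (norm_nonneg _) (norm_nonneg _)]
  linarith [norm_one_sub_conj_mul_sq_sub_norm_sub_sq u v]

/-- The pseudo-hyperbolic distance. On the closed disk the denominator vanishes only when
`u = v` is unimodular, where the junk value `0` is the right one. -/
def pseudoDist (u v : ℂ) : ℝ := ‖u - v‖ / ‖1 - conj u * v‖

lemma pseudoDist_le_one {u v : ℂ} (hu : ‖u‖ ≤ 1) (hv : ‖v‖ ≤ 1) : pseudoDist u v ≤ 1 :=
  div_le_one_of_le₀ (norm_sub_le_norm_one_sub_conj_mul hu hv) (norm_nonneg _)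

lemma norm_sub_le_two_mul_pseudoDist {u v : ℂ} (hu : ‖u‖ ≤ 1) (hv : ‖v‖ ≤ 1) :
    ‖u - v‖ ≤ 2 * pseudoDist u v := by
  rcases eq_or_ne u v with rfl | huv
  · simp [pseudoDist]
  have hden : 0 < ‖1 - conj u * v‖ :=
    (norm_pos_iff.2 (sub_ne_zero.2 huv)).trans_le (norm_sub_le_norm_one_sub_conj_mul hu hv)
  have hden_le : ‖1 - conj u * v‖ ≤ 2 := by
    calc ‖1 - conj u * v‖ ≤ ‖(1 : ℂ)‖ + ‖u‖ * ‖v‖ := by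
          simpa using norm_sub_le (1 : ℂ) (conj u * v)
      _ ≤ 2 := by rw [norm_one]; nlinarith [norm_nonneg u, norm_nonneg v]
  rw [pseudoDist, mul_div_assoc', le_div_iff₀ hden]
  nlinarith [norm_nonneg (u - v)]

def mobius (γ w : ℂ) : ℂ := (γ + w) / (1 + conj γ * w)

lemma norm_mobius_le_one {γ w : ℂ} (hγ : ‖γ‖ ≤ 1) (hw : ‖w‖ ≤ 1) : ‖mobius γ w‖ ≤ 1 := by
  have h := norm_sub_le_norm_one_sub_conj_mul (u := -γ) (norm_neg γ ▸ hγ) hw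
  rw [← norm_neg (-γ - w)] at h
  simp only [neg_sub', neg_neg, map_neg, neg_mul, sub_neg_eq_add] at h
  rw [mobius, norm_div]
  exact div_le_one_of_le₀ h (norm_nonneg _)

lemma one_add_conj_mul_ne_zero {γ w : ℂ} (hγ : ‖γ‖ < 1) (hw : ‖w‖ ≤ 1) :
    1 + conj γ * w ≠ 0 := by
  intro h
  have h1 : ‖conj γ * w‖ < 1 := by
    rw [norm_mul, Complex.norm_conj]
    exact mul_lt_one_of_nonneg_of_lt_one_left (norm_nonneg γ) hγ hw
  rw [eq_neg_of_add_eq_zero_right h, norm_neg, norm_one] at h1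
  exact lt_irrefl _ h1

lemma pseudoDist_mobius {γ u v : ℂ} (hγ : ‖γ‖ < 1) (hu : ‖u‖ ≤ 1) (hv : ‖v‖ ≤ 1) :
    pseudoDist (mobius γ u) (mobius γ v) = pseudoDist u v := by
  have hA := one_add_conj_mul_ne_zero hγ hu
  have hB := one_add_conj_mul_ne_zero hγ hv
  have hA' : 1 + conj u * γ ≠ 0 := by simpa [mul_comm] using (_root_.map_ne_zero conj).2 hA
  have hc : 1 - γ * conj γ ≠ 0 := by
    rw [Complex.mul_conj', sub_ne_zero, ne_comm]
    exact_mod_cast (pow_lt_one₀ (norm_nonneg γ) hγ two_ne_zero).ne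
  have hsub : mobius γ u - mobius γ v
      = (1 - γ * conj γ) * (u - v) / ((1 + conj γ * u) * (1 + conj γ * v)) := by
    rw [mobius, mobius, div_sub_div _ _ hA hB]
    ring
  have hden : 1 - conj (mobius γ u) * mobius γ v
      = (1 - γ * conj γ) * (1 - conj u * v) / (conj (1 + conj γ * u) * (1 + conj γ * v)) := by
    simp only [mobius, map_div₀, map_add, map_mul, map_one, Complex.conj_conj]
    field_simp
    ring
  rw [pseudoDist, pseudoDist, hsub, hden, norm_div, norm_div, norm_mul, norm_mul, norm_mul,
    norm_mul, Complex.norm_conj, div_div_div_cancel_right₀ (by simp [hA, hB]),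
    mul_div_mul_left _ _ (norm_ne_zero_iff.2 hc)]

lemma norm_le_norm_add_of_re_mul_conj_nonneg {a b : ℂ} (h : 0 ≤ (a * conj b).re) :
    ‖a‖ ≤ ‖a + b‖ := by
  rw [← sq_le_sq₀ (norm_nonneg _) (norm_nonneg _), Complex.sq_norm, Complex.sq_norm,
    Complex.normSq_add]
  linarith [Complex.normSq_nonneg b]

/-- The decomposition `2 (1 - r²t) = (1 + r²)(1 - t) + (1 - r²)(1 + t)` has summands at an
acute angle, since `Re ((1 - t) conj (1 + t)) = 1 - |t|²`. -/
lemma one_add_sq_mul_norm_one_sub_le {r : ℝ} {t : ℂ} (hr : r ^ 2 ≤ 1) (ht : ‖t‖ ≤ 1) :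
    (1 + r ^ 2) * ‖1 - t‖ ≤ 2 * ‖1 - (r : ℂ) ^ 2 * t‖ := by
  have hacute :
      0 ≤ (((1 + r ^ 2 : ℝ) : ℂ) * (1 - t) * conj (((1 - r ^ 2 : ℝ) : ℂ) * (1 + t))).re := by
    have ht2 : t.re ^ 2 + t.im ^ 2 ≤ 1 := by
      rw [sq, sq, ← Complex.normSq_apply, Complex.normSq_eq_norm_sq]
      nlinarith [norm_nonneg t]
    simp only [Complex.mul_re, Complex.mul_im, Complex.conj_re, Complex.conj_im,
      Complex.ofReal_re, Complex.ofReal_im, Complex.sub_re, Complex.sub_im, Complex.add_re,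
      Complex.add_im, Complex.one_re, Complex.one_im]
    nlinarith [mul_nonneg (by positivity : (0:ℝ) ≤ 1 + r ^ 2) (sub_nonneg.2 hr)]
  calc (1 + r ^ 2) * ‖1 - t‖ = ‖((1 + r ^ 2 : ℝ) : ℂ) * (1 - t)‖ := by
        rw [norm_mul, Complex.norm_real, Real.norm_of_nonneg (by positivity)]
    _ ≤ ‖((1 + r ^ 2 : ℝ) : ℂ) * (1 - t) + ((1 - r ^ 2 : ℝ) : ℂ) * (1 + t)‖ :=
        norm_le_norm_add_of_re_mul_conj_nonneg hacute
    _ = 2 * ‖1 - (r : ℂ) ^ 2 * t‖ := by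
        rw [show ((1 + r ^ 2 : ℝ) : ℂ) * (1 - t) + ((1 - r ^ 2 : ℝ) : ℂ) * (1 + t)
            = 2 * (1 - (r : ℂ) ^ 2 * t) by push_cast; ring, norm_mul, Complex.norm_two]

/-- The factor by which multiplication by `z`, `|z| = r`, contracts `pseudoDist` on the closed
disk: `r |1 - t| / |1 - r² t|` is largest at `t = -1`. -/
def contraction (r : ℝ) : ℝ := 2 * r / (1 + r ^ 2)

lemma contraction_nonneg {r : ℝ} (hr : 0 ≤ r) : 0 ≤ contraction r := by
  unfold contraction; positivity

lemma contraction_lt_one {r : ℝ} (hr : r < 1) : contraction r < 1 := by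
  rw [contraction, div_lt_one (by positivity)]
  nlinarith [sq_pos_of_pos (sub_pos.2 hr)]

lemma contraction_le_contraction {a b : ℝ} (ha : 0 ≤ a) (hab : a ≤ b) (hb : b ≤ 1) :
    contraction a ≤ contraction b := by
  rw [contraction, contraction, div_le_div_iff₀ (by positivity) (by positivity)]
  nlinarith [mul_nonneg (sub_nonneg.2 hab) (by nlinarith : (0:ℝ) ≤ 1 - a * b)]

lemma tendsto_contraction_pow {r : ℝ} (hr0 : 0 ≤ r) (hr : r < 1) :
    Tendsto (fun N : ℕ => 2 * contraction r ^ N) atTop (𝓝 0) := by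
  simpa using (tendsto_pow_atTop_nhds_zero_of_lt_one (contraction_nonneg hr0)
    (contraction_lt_one hr)).const_mul 2

lemma pseudoDist_mul_le {z u v : ℂ} (hz : ‖z‖ ≤ 1) (hu : ‖u‖ ≤ 1) (hv : ‖v‖ ≤ 1) :
    pseudoDist (z * u) (z * v) ≤ contraction ‖z‖ * pseudoDist u v := by
  rcases eq_or_ne u v with rfl | huv
  · simp [pseudoDist]
  set t := conj u * v
  have hconj : conj (z * u) * (z * v) = (‖z‖ : ℂ) ^ 2 * t := by
    rw [map_mul, ← Complex.conj_mul']; ring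
  have ht : ‖t‖ ≤ 1 := norm_mul_le_one (by rwa [Complex.norm_conj]) hv
  have hz2 : ‖z‖ ^ 2 ≤ 1 := pow_le_one₀ (norm_nonneg z) hz
  have hkey := one_add_sq_mul_norm_one_sub_le hz2 ht
  have hnum : 0 < ‖u - v‖ := norm_pos_iff.2 (sub_ne_zero.2 huv)
  have hden : 0 < ‖1 - t‖ := hnum.trans_le (norm_sub_le_norm_one_sub_conj_mul hu hv)
  have hden' : 0 < ‖1 - (‖z‖ : ℂ) ^ 2 * t‖ := by nlinarith
  rw [pseudoDist, pseudoDist, hconj, ← mul_sub, norm_mul, contraction, div_mul_div_comm,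
    div_le_div_iff₀ hden' (by positivity)]
  calc ‖z‖ * ‖u - v‖ * ((1 + ‖z‖ ^ 2) * ‖1 - t‖)
      ≤ ‖z‖ * ‖u - v‖ * (2 * ‖1 - (‖z‖ : ℂ) ^ 2 * t‖) := by gcongr
    _ = 2 * ‖z‖ * ‖u - v‖ * ‖1 - (‖z‖ : ℂ) ^ 2 * t‖ := by ring

lemma pseudoDist_mobius_mul_le {γ z u v : ℂ} (hγ : ‖γ‖ < 1) (hz : ‖z‖ ≤ 1) (hu : ‖u‖ ≤ 1)
    (hv : ‖v‖ ≤ 1) :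
    pseudoDist (mobius γ (z * u)) (mobius γ (z * v)) ≤ contraction ‖z‖ * pseudoDist u v := by
  rw [pseudoDist_mobius hγ (norm_mul_le_one hz hu) (norm_mul_le_one hz hv)]
  exact pseudoDist_mul_le hz hu hv

end Schur

namespace SchurIterates

open Schur Metric

variable {fs gs : ℕ → ℂ → ℂ} {z : ℂ}

lemma norm_apply_le_one (hf : SchurIterates fs) (hz : z ∈ ball (0 : ℂ) 1) (n : ℕ) :
    ‖fs n z‖ ≤ 1 :=
  (hf.1 n).2 z hz

lemma apply_eq_mobius (hf : SchurIterates fs) (hz : z ∈ ball (0 : ℂ) 1) (n : ℕ) :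
    fs n z = mobius (fs n 0) (z * fs (n + 1) z) := by
  rw [hf.2.2 n z hz, mobius, mul_assoc]

lemma pseudoDist_le_contraction_pow (hf : SchurIterates fs) (hg : SchurIterates gs)
    (hfg : ∀ n, fs n 0 = gs n 0) (hz : z ∈ ball (0 : ℂ) 1) (N : ℕ) :
    ∀ n, pseudoDist (fs n z) (gs n z) ≤ contraction ‖z‖ ^ N := by
  have hz1 : ‖z‖ ≤ 1 := (mem_ball_zero_iff.1 hz).le
  induction N with
  | zero =>
    intro n
    simpa using pseudoDist_le_one (hf.norm_apply_le_one hz n) (hg.norm_apply_le_one hz n)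
  | succ N ih =>
    intro n
    rw [hf.apply_eq_mobius hz, hg.apply_eq_mobius hz, ← hfg, pow_succ']
    exact (pseudoDist_mobius_mul_le (hf.2.1 n) hz1 (hf.norm_apply_le_one hz _)
      (hg.norm_apply_le_one hz _)).trans
      (mul_le_mul_of_nonneg_left (ih _) (contraction_nonneg (norm_nonneg z)))

lemma eqOn_of_apply_zero_eq (hf : SchurIterates fs) (hg : SchurIterates gs)
    (hfg : ∀ n, fs n 0 = gs n 0) (n : ℕ) : Set.EqOn (fs n) (gs n) (ball 0 1) := by
  intro z hz
  have hbound : ∀ N : ℕ, ‖fs n z - gs n z‖ ≤ 2 * contraction ‖z‖ ^ N := fun N =>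
    (norm_sub_le_two_mul_pseudoDist (hf.norm_apply_le_one hz n) (hg.norm_apply_le_one hz n)).trans
      (mul_le_mul_of_nonneg_left (hf.pseudoDist_le_contraction_pow hg hfg hz N n) zero_le_two)
  have hzero := ge_of_tendsto' (tendsto_contraction_pow (norm_nonneg z) (mem_ball_zero_iff.1 hz))
    hbound
  rwa [norm_le_zero_iff, sub_eq_zero] at hzero

end SchurIterates

namespace Schur

open Metric

variable {γ : ℕ → ℂ} {z : ℂ}

/-- The Schur function with parameters `γ n, …, γ (n + N - 1)` whose `N`-th Schur iterate
is `0`. -/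
def approx (γ : ℕ → ℂ) : ℕ → ℕ → ℂ → ℂ
  | _, 0, _ => 0
  | n, N + 1, z => mobius (γ n) (z * approx γ (n + 1) N z)

lemma norm_approx_le_one (hγ : ∀ n, ‖γ n‖ ≤ 1) (hz : ‖z‖ ≤ 1) (N : ℕ) :
    ∀ n, ‖approx γ n N z‖ ≤ 1 := by
  induction N with
  | zero => simp [approx]
  | succ N ih => exact fun n => norm_mobius_le_one (hγ n) (norm_mul_le_one hz (ih _))

lemma approx_succ_apply_zero (n N : ℕ) : approx γ n (N + 1) 0 = γ n := by
  simp [approx, mobius]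

lemma differentiableOn_approx (hγ : ∀ n, ‖γ n‖ < 1) (N : ℕ) :
    ∀ n, DifferentiableOn ℂ (approx γ n N) (ball 0 1) := by
  induction N with
  | zero => exact fun n => differentiableOn_const 0
  | succ N ih =>
    intro n
    have hw : DifferentiableOn ℂ (fun z => z * approx γ (n + 1) N z) (ball 0 1) :=
      differentiableOn_id.mul (ih _)
    refine ((differentiableOn_const _).add hw).div ((differentiableOn_const _).add
      ((differentiableOn_const _).mul hw)) fun z hz => one_add_conj_mul_ne_zero (hγ n) ?_
    exact norm_mul_le_one (mem_ball_zero_iff.1 hz).le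
      (norm_approx_le_one (fun n => (hγ n).le) (mem_ball_zero_iff.1 hz).le N _)

lemma pseudoDist_approx_le (hγ : ∀ n, ‖γ n‖ < 1) (hz : ‖z‖ ≤ 1) (N M : ℕ) :
    ∀ n, pseudoDist (approx γ n N z) (approx γ n (N + M) z) ≤ contraction ‖z‖ ^ N := by
  have hbound := norm_approx_le_one (fun n => (hγ n).le) hz
  induction N with
  | zero =>
    intro n
    simpa using pseudoDist_le_one (hbound 0 n) (hbound M n)
  | succ N ih =>
    intro n
    rw [Nat.add_right_comm, approx, approx, pow_succ']
    exact (pseudoDist_mobius_mul_le (hγ n) hz (hbound _ _) (hbound _ _)).trans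
      (mul_le_mul_of_nonneg_left (ih _) (contraction_nonneg (norm_nonneg z)))

lemma norm_approx_sub_le (hγ : ∀ n, ‖γ n‖ < 1) (hz : ‖z‖ ≤ 1) (n N M : ℕ) :
    ‖approx γ n N z - approx γ n (N + M) z‖ ≤ 2 * contraction ‖z‖ ^ N := by
  have hbound := norm_approx_le_one (fun n => (hγ n).le) hz
  exact (norm_sub_le_two_mul_pseudoDist (hbound _ _) (hbound _ _)).trans
    (mul_le_mul_of_nonneg_left (pseudoDist_approx_le hγ hz N M n) zero_le_two)

def ofParams (γ : ℕ → ℂ) (n : ℕ) (z : ℂ) : ℂ :=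
  limUnder atTop fun N => approx γ n N z

lemma tendsto_approx (hγ : ∀ n, ‖γ n‖ < 1) (hz : ‖z‖ < 1) (n : ℕ) :
    Tendsto (fun N => approx γ n N z) atTop (𝓝 (ofParams γ n z)) := by
  refine (cauchySeq_of_le_geometric _ 2 (contraction_lt_one hz) fun N => ?_).tendsto_limUnder
  rw [dist_eq_norm]
  exact norm_approx_sub_le hγ hz.le n N 1

lemma norm_approx_sub_ofParams_le (hγ : ∀ n, ‖γ n‖ < 1) (hz : ‖z‖ < 1) (n N : ℕ) :
    ‖approx γ n N z - ofParams γ n z‖ ≤ 2 * contraction ‖z‖ ^ N := by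
  have htail : Tendsto (fun M => ‖approx γ n N z - approx γ n (M + N) z‖) atTop
      (𝓝 ‖approx γ n N z - ofParams γ n z‖) :=
    (tendsto_const_nhds.sub ((tendsto_approx hγ hz n).comp (tendsto_add_atTop_nat N))).norm
  exact le_of_tendsto' htail fun M => add_comm N M ▸ norm_approx_sub_le hγ hz.le n N M

lemma tendstoLocallyUniformlyOn_approx (hγ : ∀ n, ‖γ n‖ < 1) (n : ℕ) :
    TendstoLocallyUniformlyOn (approx γ n) (ofParams γ n) atTop (ball 0 1) := by
  rw [tendstoLocallyUniformlyOn_iff_forall_isCompact isOpen_ball]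
  intro K hK1 hK
  obtain ⟨r, hr1, hKr⟩ := exists_lt_subset_ball hK.isClosed hK1
  set s := max r 0
  rw [Metric.tendstoUniformlyOn_iff]
  intro ε hε
  filter_upwards [(tendsto_contraction_pow (le_max_right r 0) (max_lt hr1 one_pos)).eventually
    (gt_mem_nhds hε)] with N hN y hy
  have hys : ‖y‖ < s := (mem_ball_zero_iff.1 (hKr hy)).trans_le (le_max_left r 0)
  have hs1 : s < 1 := max_lt hr1 one_pos
  rw [dist_comm, dist_eq_norm]
  calc ‖approx γ n N y - ofParams γ n y‖ ≤ 2 * contraction ‖y‖ ^ N :=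
        norm_approx_sub_ofParams_le hγ (hys.trans hs1) n N
    _ ≤ 2 * contraction s ^ N := by
        gcongr
        · exact contraction_nonneg (norm_nonneg y)
        · exact contraction_le_contraction (norm_nonneg y) hys.le hs1.le
    _ < ε := hN

lemma norm_ofParams_le_one (hγ : ∀ n, ‖γ n‖ < 1) (hz : ‖z‖ < 1) (n : ℕ) :
    ‖ofParams γ n z‖ ≤ 1 :=
  le_of_tendsto' (tendsto_approx hγ hz n).norm
    fun N => norm_approx_le_one (fun n => (hγ n).le) hz.le N n

lemma ofParams_apply_zero (hγ : ∀ n, ‖γ n‖ < 1) (n : ℕ) : ofParams γ n 0 = γ n := by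
  refine tendsto_nhds_unique (tendsto_approx hγ (by simp) n) ?_
  exact (tendsto_add_atTop_iff_nat 1).1 (by simp [approx_succ_apply_zero])

lemma ofParams_eq_mobius (hγ : ∀ n, ‖γ n‖ < 1) (hz : ‖z‖ < 1) (n : ℕ) :
    ofParams γ n z = mobius (γ n) (z * ofParams γ (n + 1) z) := by
  have hw := (tendsto_approx hγ hz (n + 1)).const_mul z
  have hden : 1 + conj (γ n) * (z * ofParams γ (n + 1) z) ≠ 0 :=
    one_add_conj_mul_ne_zero (hγ n) (norm_mul_le_one hz.le (norm_ofParams_le_one hγ hz _))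
  refine tendsto_nhds_unique ((tendsto_add_atTop_iff_nat 1).2 (tendsto_approx hγ hz n)) ?_
  exact (tendsto_const_nhds.add hw).div (tendsto_const_nhds.add (hw.const_mul _)) hden

lemma schurIterates_ofParams (hγ : ∀ n, ‖γ n‖ < 1) : SchurIterates (ofParams γ) := by
  refine ⟨fun n => ⟨?_, fun z hz => ?_⟩, fun n => ?_, fun n z hz => ?_⟩
  · exact (tendstoLocallyUniformlyOn_approx hγ n).differentiableOn
      (Eventually.of_forall fun N => differentiableOn_approx hγ N n) isOpen_ball
  · exact norm_ofParams_le_one hγ (mem_ball_zero_iff.1 hz) n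
  · exact ofParams_apply_zero hγ n ▸ hγ n
  · rw [ofParams_eq_mobius hγ (mem_ball_zero_iff.1 hz), ofParams_apply_zero hγ, mobius,
      mul_assoc]

end Schur

/-- a Schur function with non-terminating Schur algorithm is determined by
its Schur parameters, and every sequence in `𝔻^∞` arises as the Schur parameters of
some Schur function. -/
theorem stmt7 :
    (∀ fs gs : ℕ → ℂ → ℂ, SchurIterates fs → SchurIterates gs →
      (∀ n, fs n 0 = gs n 0) → ∀ z ∈ Metric.ball (0:ℂ) 1, fs 0 z = gs 0 z) ∧
    (∀ γ : ℕ → ℂ, (∀ n, ‖γ n‖ < 1) →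
      ∃ fs : ℕ → ℂ → ℂ, SchurIterates fs ∧ ∀ n, fs n 0 = γ n) :=
  ⟨fun _ _ hf hg hfg => hf.eqOn_of_apply_zero_eq hg hfg 0,
    fun γ hγ =>
      ⟨Schur.ofParams γ, Schur.schurIterates_ofParams hγ, Schur.ofParams_apply_zero hγ⟩⟩

end
end

section
/- Let f and g be Schur functions and suppose their Schur parameters agree for the first n steps: γ_j(f) = γ_j(g) for j = 0, …, n−1 (with all these parameters in 𝔻). Then |f(z) − g(z)| ≤ 2|z|^n for all z ∈ 𝔻. -/
open MeasureTheory Polynomial Filter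

noncomputable section

/-!
One step of the Schur algorithm is a Möbius map in `w = z f₁(z)`, and for two functions with the
same parameter `γ` it gives
`f(z) - g(z) = z (1 - |γ|²) (f₁(z) - g₁(z)) / ((1 + γ̄ z f₁(z)) (1 + γ̄ z g₁(z)))`.
By induction, agreement of the first `n` parameters makes `f - g = zⁿ H` with `H` holomorphic on
`𝔻`. Since `|f - g| ≤ 2`, the maximum principle on the circles `|z| = ρ → 1` bounds `|H|` by `2`,
as in the Schwarz lemma.
-/

open Metric

lemma one_add_conj_mul_mul_ne_zero {γ z a : ℂ} (hγ : ‖γ‖ ≤ 1) (hz : ‖z‖ < 1) (ha : ‖a‖ ≤ 1) :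
    1 + starRingEnd ℂ γ * z * a ≠ 0 := by
  have hlt : ‖starRingEnd ℂ γ * z * a‖ < 1 := by
    rw [norm_mul, norm_mul, Complex.norm_conj]
    calc ‖γ‖ * ‖z‖ * ‖a‖ ≤ 1 * ‖z‖ * 1 := by gcongr
      _ < 1 := by simpa using hz
  intro h
  rw [show starRingEnd ℂ γ * z * a = -1 by linear_combination h] at hlt
  simp at hlt

lemma schurStep_sub_schurStep {γ z a b : ℂ} (ha : 1 + starRingEnd ℂ γ * z * a ≠ 0)
    (hb : 1 + starRingEnd ℂ γ * z * b ≠ 0) :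
    (γ + z * a) / (1 + starRingEnd ℂ γ * z * a) - (γ + z * b) / (1 + starRingEnd ℂ γ * z * b) =
      z * ((1 - starRingEnd ℂ γ * γ) * (a - b) /
        ((1 + starRingEnd ℂ γ * z * a) * (1 + starRingEnd ℂ γ * z * b))) := by
  rw [div_sub_div _ _ ha hb, mul_div_assoc']
  congr 1
  ring

lemma exists_sub_eq_pow_succ_mul_of_schurStep {n : ℕ} {γ : ℂ} (hγ : ‖γ‖ ≤ 1)
    {f g F G H : ℂ → ℂ} (hF : IsSchur F) (hG : IsSchur G)
    (hf : ∀ z ∈ ball (0 : ℂ) 1, f z = (γ + z * F z) / (1 + starRingEnd ℂ γ * z * F z))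
    (hg : ∀ z ∈ ball (0 : ℂ) 1, g z = (γ + z * G z) / (1 + starRingEnd ℂ γ * z * G z))
    (hH : DifferentiableOn ℂ H (ball 0 1)) (hFG : ∀ z ∈ ball (0 : ℂ) 1, F z - G z = z ^ n * H z) :
    ∃ H' : ℂ → ℂ, DifferentiableOn ℂ H' (ball 0 1) ∧
      ∀ z ∈ ball (0 : ℂ) 1, f z - g z = z ^ (n + 1) * H' z := by
  have hden : ∀ {K : ℂ → ℂ}, IsSchur K → ∀ z ∈ ball (0 : ℂ) 1, 1 + starRingEnd ℂ γ * z * K z ≠ 0 :=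
    fun hK z hz => one_add_conj_mul_mul_ne_zero hγ (mem_ball_zero_iff.mp hz) (hK.2 z hz)
  have hdenDiff : ∀ {K : ℂ → ℂ}, IsSchur K →
      DifferentiableOn ℂ (fun z => 1 + starRingEnd ℂ γ * z * K z) (ball 0 1) :=
    fun hK => (differentiableOn_const _).add
      (((differentiableOn_const _).mul differentiableOn_id).mul hK.1)
  refine ⟨fun z => (1 - starRingEnd ℂ γ * γ) * H z /
      ((1 + starRingEnd ℂ γ * z * F z) * (1 + starRingEnd ℂ γ * z * G z)), ?_, ?_⟩
  · exact ((differentiableOn_const _).mul hH).div ((hdenDiff hF).mul (hdenDiff hG))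
      fun z hz => mul_ne_zero (hden hF z hz) (hden hG z hz)
  · intro z hz
    rw [hf z hz, hg z hz, schurStep_sub_schurStep (hden hF z hz) (hden hG z hz), hFG z hz]
    ring

lemma exists_sub_eq_pow_mul_of_schurParams_eq (n : ℕ) (fs gs : ℕ → ℂ → ℂ)
    (hfS : ∀ j ≤ n, IsSchur (fs j)) (hgS : ∀ j ≤ n, IsSchur (gs j))
    (hfrec : ∀ j < n, ∀ z ∈ ball (0 : ℂ) 1,
      fs j z = (fs j 0 + z * fs (j + 1) z) / (1 + starRingEnd ℂ (fs j 0) * z * fs (j + 1) z))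
    (hgrec : ∀ j < n, ∀ z ∈ ball (0 : ℂ) 1,
      gs j z = (gs j 0 + z * gs (j + 1) z) / (1 + starRingEnd ℂ (gs j 0) * z * gs (j + 1) z))
    (hagree : ∀ j < n, fs j 0 = gs j 0) :
    ∃ H : ℂ → ℂ, DifferentiableOn ℂ H (ball 0 1) ∧
      ∀ z ∈ ball (0 : ℂ) 1, fs 0 z - gs 0 z = z ^ n * H z := by
  induction n generalizing fs gs with
  | zero =>
    exact ⟨fun z => fs 0 z - gs 0 z, (hfS 0 le_rfl).1.sub (hgS 0 le_rfl).1, fun z _ => by simp⟩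
  | succ n ih =>
    obtain ⟨H, hH, hFG⟩ := ih (fun j => fs (j + 1)) (fun j => gs (j + 1))
      (fun j hj => hfS (j + 1) (by omega)) (fun j hj => hgS (j + 1) (by omega))
      (fun j hj => hfrec (j + 1) (by omega)) (fun j hj => hgrec (j + 1) (by omega))
      (fun j hj => hagree (j + 1) (by omega))
    have hγ : ‖fs 0 0‖ ≤ 1 := (hfS 0 (by omega)).2 0 (mem_ball_self one_pos)
    have hg : ∀ z ∈ ball (0 : ℂ) 1, gs 0 z =
        (fs 0 0 + z * gs 1 z) / (1 + starRingEnd ℂ (fs 0 0) * z * gs 1 z) := by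
      simpa only [hagree 0 n.succ_pos] using hgrec 0 n.succ_pos
    exact exists_sub_eq_pow_succ_mul_of_schurStep hγ (hfS 1 (by omega)) (hgS 1 (by omega))
      (hfrec 0 n.succ_pos) hg hH hFG

lemma norm_le_of_forall_norm_pow_mul_le {H : ℂ → ℂ} {n : ℕ} {M : ℝ}
    (hH : DifferentiableOn ℂ H (ball 0 1)) (hHM : ∀ w ∈ ball (0 : ℂ) 1, ‖w‖ ^ n * ‖H w‖ ≤ M)
    {z : ℂ} (hz : z ∈ ball (0 : ℂ) 1) : ‖H z‖ ≤ M := by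
  rw [mem_ball_zero_iff] at hz
  have hcircle : ∀ ρ ∈ Set.Ioo ‖z‖ 1, ρ ^ n * ‖H z‖ ≤ M := by
    rintro ρ ⟨hzρ, hρ1⟩
    have hρpos : 0 < ρ := hzρ.trans_le' (norm_nonneg z)
    have hρ : ρ ≠ 0 := hρpos.ne'
    have hcl : closure (ball (0 : ℂ) ρ) ⊆ ball 0 1 := by
      rw [closure_ball 0 hρ]
      exact closedBall_subset_ball hρ1
    have hmax : ‖H z‖ ≤ M / ρ ^ n := by
      refine Complex.norm_le_of_forall_mem_frontier_norm_le isBounded_ball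
        (hH.mono hcl).diffContOnCl (fun w hw => ?_) (subset_closure (mem_ball_zero_iff.mpr hzρ))
      rw [frontier_ball 0 hρ, mem_sphere_zero_iff_norm] at hw
      rw [le_div_iff₀' (by positivity), ← hw]
      exact hHM w (mem_ball_zero_iff.mpr (hw ▸ hρ1))
    rwa [le_div_iff₀' (by positivity)] at hmax
  have hlim : Tendsto (fun ρ : ℝ => ρ ^ n * ‖H z‖) (nhdsWithin 1 (Set.Iio 1))
      (nhds ‖H z‖) := by
    have hcont : Continuous fun ρ : ℝ => ρ ^ n * ‖H z‖ := by fun_prop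
    simpa using (hcont.tendsto 1).mono_left nhdsWithin_le_nhds
  exact le_of_tendsto hlim (mem_of_superset (Ioo_mem_nhdsLT hz) hcircle)

lemma norm_le_mul_norm_pow_of_eq_pow_mul {φ H : ℂ → ℂ} {n : ℕ} {M : ℝ}
    (hH : DifferentiableOn ℂ H (ball 0 1)) (hφH : ∀ z ∈ ball (0 : ℂ) 1, φ z = z ^ n * H z)
    (hφ : ∀ z ∈ ball (0 : ℂ) 1, ‖φ z‖ ≤ M) {z : ℂ} (hz : z ∈ ball (0 : ℂ) 1) :
    ‖φ z‖ ≤ M * ‖z‖ ^ n := by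
  have hHM : ∀ w ∈ ball (0 : ℂ) 1, ‖w‖ ^ n * ‖H w‖ ≤ M := fun w hw => by
    simpa [hφH w hw] using hφ w hw
  rw [hφH z hz, norm_mul, norm_pow, mul_comm M]
  exact mul_le_mul_of_nonneg_left (norm_le_of_forall_norm_pow_mul_le hH hHM hz) (by positivity)

theorem stmt8_general (n : ℕ) (fs gs : ℕ → ℂ → ℂ)
    (hfS : ∀ j ≤ n, IsSchur (fs j)) (hgS : ∀ j ≤ n, IsSchur (gs j))
    (hfrec : ∀ j < n, ∀ z ∈ Metric.ball (0:ℂ) 1,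
      fs j z = (fs j 0 + z * fs (j + 1) z) / (1 + (starRingEnd ℂ) (fs j 0) * z * fs (j + 1) z))
    (hgrec : ∀ j < n, ∀ z ∈ Metric.ball (0:ℂ) 1,
      gs j z = (gs j 0 + z * gs (j + 1) z) / (1 + (starRingEnd ℂ) (gs j 0) * z * gs (j + 1) z))
    (hagree : ∀ j < n, fs j 0 = gs j 0) :
    ∀ z ∈ Metric.ball (0:ℂ) 1, ‖fs 0 z - gs 0 z‖ ≤ 2 * ‖z‖ ^ n := by
  obtain ⟨H, hH, hfg⟩ :=
    exists_sub_eq_pow_mul_of_schurParams_eq n fs gs hfS hgS hfrec hgrec hagree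
  have hbound : ∀ w ∈ ball (0 : ℂ) 1, ‖fs 0 w - gs 0 w‖ ≤ 2 := fun w hw =>
    calc ‖fs 0 w - gs 0 w‖ ≤ ‖fs 0 w‖ + ‖gs 0 w‖ := norm_sub_le _ _
      _ ≤ 1 + 1 := add_le_add ((hfS 0 n.zero_le).2 w hw) ((hgS 0 n.zero_le).2 w hw)
      _ = 2 := one_add_one_eq_two
  exact fun z hz => norm_le_mul_norm_pow_of_eq_pow_mul hH hfg hbound hz

/-- if the Schur parameters of `f = fs 0` and `g = gs 0` agree for
`j = 0, …, n−1` (all lying in `𝔻`), then `|f(z) − g(z)| ≤ 2|z|^n` on `𝔻`. -/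
theorem stmt8 (n : ℕ) (fs gs : ℕ → ℂ → ℂ)
    (hfS : ∀ j ≤ n, IsSchur (fs j)) (hgS : ∀ j ≤ n, IsSchur (gs j))
    (hfγ : ∀ j < n, ‖fs j 0‖ < 1) (hgγ : ∀ j < n, ‖gs j 0‖ < 1)
    (hfrec : ∀ j < n, ∀ z ∈ Metric.ball (0:ℂ) 1,
      fs j z = (fs j 0 + z * fs (j + 1) z) / (1 + (starRingEnd ℂ) (fs j 0) * z * fs (j + 1) z))
    (hgrec : ∀ j < n, ∀ z ∈ Metric.ball (0:ℂ) 1,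
      gs j z = (gs j 0 + z * gs (j + 1) z) / (1 + (starRingEnd ℂ) (gs j 0) * z * gs (j + 1) z))
    (hagree : ∀ j < n, fs j 0 = gs j 0) :
    ∀ z ∈ Metric.ball (0:ℂ) 1, ‖fs 0 z - gs 0 z‖ ≤ 2 * ‖z‖ ^ n :=
  stmt8_general n fs gs hfS hgS hfrec hgrec hagree

end
end

section
/- Let P_n be a polynomial of degree n all of whose zeros lie in the open unit disk 𝔻, and let dμ = c·dθ/(2π·|P_n(e^{iθ})|²) where c > 0 is chosen so that μ is a probability measure on ∂𝔻. Then for every integer j with j < n (including negative j), ⟨z^j, P_n⟩_{L²(∂𝔻, dμ)} = 0, i.e., ∫ e^{−ijθ}·P_n(e^{iθ}) dμ(θ) = 0. -/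
/-!
On the unit circle `conj z = z⁻¹`, so `P(z) / |P(z)|² = 1 / conj (P(z)) = zⁿ / P*(z)`, where
`P* = revStar n P` is the reversed polynomial. The zeros of `P*` are the reflections
`1 / conj w` of the zeros `w` of `P`, so `P*` has no zeros in the closed disk. Substituting
`z = e^{iθ}`, `dθ = dz / (i z)`, the integral becomes a constant times
`∮_{|z|=1} z^(n-1-j) / P*(z) dz`, which vanishes by Cauchy's theorem because `n - 1 - j ≥ 0`.
-/

open MeasureTheory Polynomial Filter

noncomputable section

open ComplexConjugate

lemma revStar_eval {n : ℕ} {P : ℂ[X]} (hP : P.natDegree ≤ n) {z : ℂ} (hz : z ≠ 0) :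
    (revStar n P).eval z = z ^ n * conj (P.eval (conj z)⁻¹) := by
  simp only [revStar, eval_finsetSum, eval_mul, eval_C, eval_pow, eval_X]
  rw [P.eval_eq_sum_range' (Nat.lt_succ_of_le hP), map_sum, Finset.mul_sum,
    ← Finset.sum_range_reflect]
  refine Finset.sum_congr rfl fun j hj => ?_
  have hjn : j ≤ n := Nat.lt_succ_iff.mp (Finset.mem_range.mp hj)
  have hidx : n - (n + 1 - 1 - j) = j := by omega
  have hpow : z ^ n = z ^ (n + 1 - 1 - j) * z ^ j := by rw [← pow_add]; congr 1; omega
  simp only [map_mul, map_pow, map_inv₀, Complex.conj_conj, hidx, hpow, inv_pow]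
  field_simp

lemma revStar_eval_of_norm_eq_one {n : ℕ} {P : ℂ[X]} (hP : P.natDegree ≤ n) {z : ℂ}
    (hz : ‖z‖ = 1) : (revStar n P).eval z = z ^ n * conj (P.eval z) := by
  rw [revStar_eval hP (norm_ne_zero_iff.mp (hz ▸ one_ne_zero)), ← Complex.inv_eq_conj hz, inv_inv]

lemma revStar_eval_zero (n : ℕ) (P : ℂ[X]) :
    (revStar n P).eval 0 = conj (P.coeff n) := by
  simp only [revStar, eval_finsetSum, eval_mul, eval_C, eval_pow, eval_X]
  rw [Finset.sum_eq_single 0 (fun j _ hj => by simp [zero_pow hj]) (by simp)]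
  simp

lemma revStar_eval_ne_zero {n : ℕ} {P : ℂ[X]} (hdeg : P.degree = n)
    (hzeros : ∀ z : ℂ, P.eval z = 0 → ‖z‖ < 1) {z : ℂ} (hz : ‖z‖ ≤ 1) :
    (revStar n P).eval z ≠ 0 := by
  have hnd : P.natDegree = n := natDegree_eq_of_degree_eq_some hdeg
  rcases eq_or_ne z 0 with rfl | hz0
  · have hP0 : P ≠ 0 := by rintro rfl; simp at hdeg
    simpa [revStar_eval_zero, ← hnd] using hP0
  · rw [revStar_eval hnd.le hz0]
    refine mul_ne_zero (pow_ne_zero _ hz0) fun h => ?_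
    have hlt := hzeros _ (by simpa using h)
    rw [norm_inv, Complex.norm_conj] at hlt
    exact hlt.not_ge ((one_le_inv₀ (norm_pos_iff.mpr hz0)).mpr hz)

lemma intervalIntegral_circleMap_mul_eq_circleIntegral (R : ℝ) (g : ℂ → ℂ) :
    ∫ θ in (0:ℝ)..(2 * Real.pi), circleMap 0 R θ * g (circleMap 0 R θ) =
      -Complex.I * ∮ z in C(0, R), g z := by
  rw [circleIntegral, ← intervalIntegral.integral_const_mul]
  congr 1 with θ
  rw [deriv_circleMap, smul_eq_mul]
  linear_combination circleMap 0 R θ * g (circleMap 0 R θ) * Complex.I_mul_I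

lemma circleIntegral_div_eq_zero {R : ℝ} (hR : 0 < R) {f g : ℂ → ℂ} (hf : Differentiable ℂ f)
    (hg : Differentiable ℂ g) (hg0 : ∀ z, ‖z‖ ≤ R → g z ≠ 0) :
    ∮ z in C(0, R), f z / g z = 0 := by
  refine DiffContOnCl.circleIntegral_eq_zero hR.le (DifferentiableOn.diffContOnCl ?_)
  rw [closure_ball 0 hR.ne']
  exact hf.differentiableOn.div hg.differentiableOn fun z hz => hg0 z (by simpa using hz)

lemma div_ofReal_norm_sq (w : ℂ) : w / (‖w‖ : ℂ) ^ 2 = (conj w)⁻¹ := by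
  rw [Complex.inv_def, Complex.conj_conj, Complex.normSq_conj, Complex.normSq_eq_norm_sq]
  push_cast
  ring

lemma zpow_neg_mul_eval_div_norm_sq {n : ℕ} {P : ℂ[X]} (hP : P.natDegree ≤ n) {z : ℂ}
    (hz : ‖z‖ = 1) (j : ℤ) :
    z ^ (-j) * P.eval z / (‖P.eval z‖ : ℂ) ^ 2 = z ^ ((n : ℤ) - j) / (revStar n P).eval z := by
  have hz0 : z ≠ 0 := norm_ne_zero_iff.mp (hz ▸ one_ne_zero)
  rw [mul_div_assoc, div_ofReal_norm_sq, revStar_eval_of_norm_eq_one hP hz, zpow_sub₀ hz0,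
    zpow_neg, zpow_natCast, div_div, mul_comm (z ^ j), ← div_div,
    div_mul_cancel_left₀ (pow_ne_zero n hz0)]
  ring

lemma exp_neg_mul_eq_circleMap_zpow (j : ℤ) (θ : ℝ) :
    Complex.exp (-Complex.I * j * θ) = circleMap 0 1 θ ^ (-j) := by
  rw [circleMap_zero, Complex.ofReal_one, one_mul, ← Complex.exp_int_mul]
  push_cast
  ring_nf

theorem stmt10_general (n : ℕ) (P : Polynomial ℂ) (hdeg : P.degree = n)
    (hzeros : ∀ z : ℂ, P.eval z = 0 → ‖z‖ < 1) (c : ℝ) :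
    ∀ j : ℤ, j < (n : ℤ) →
      (∫ θ in (0:ℝ)..(2 * Real.pi),
          Complex.exp (-Complex.I * (j : ℂ) * (θ : ℂ)) * P.eval (Complex.exp (Complex.I * θ)) *
            ((c : ℂ) / (2 * Real.pi * (‖P.eval (Complex.exp (Complex.I * θ))‖ : ℂ) ^ 2))) = 0 := by
  intro j hj
  obtain ⟨m, hm⟩ : ∃ m : ℕ, (n : ℤ) - j = m + 1 := ⟨(n - 1 - j).toNat, by omega⟩
  have hnd : P.natDegree ≤ n := (natDegree_eq_of_degree_eq_some hdeg).le
  have hintegrand : ∀ θ : ℝ,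
      Complex.exp (-Complex.I * (j : ℂ) * (θ : ℂ)) * P.eval (Complex.exp (Complex.I * θ)) *
          ((c : ℂ) / (2 * Real.pi * (‖P.eval (Complex.exp (Complex.I * θ))‖ : ℂ) ^ 2)) =
        c / (2 * Real.pi) *
          (circleMap 0 1 θ * (circleMap 0 1 θ ^ m / (revStar n P).eval (circleMap 0 1 θ))) := by
    intro θ
    set z := circleMap 0 1 θ
    have hexp : Complex.exp (Complex.I * θ) = z := by simp [z, circleMap_zero, mul_comm]
    have hz : ‖z‖ = 1 := by simp [z]
    have hmain := zpow_neg_mul_eval_div_norm_sq hnd hz j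
    rw [hm, zpow_add_one₀ (norm_ne_zero_iff.mp (hz ▸ one_ne_zero)), zpow_natCast] at hmain
    rw [hexp, exp_neg_mul_eq_circleMap_zpow]
    calc _ = c / (2 * Real.pi) * (z ^ (-j) * P.eval z / (‖P.eval z‖ : ℂ) ^ 2) := by ring
      _ = _ := by rw [hmain]; ring
  rw [intervalIntegral.integral_congr fun θ _ => hintegrand θ, intervalIntegral.integral_const_mul,
    intervalIntegral_circleMap_mul_eq_circleIntegral 1 fun z => z ^ m / (revStar n P).eval z,
    circleIntegral_div_eq_zero one_pos (differentiable_pow m) (revStar n P).differentiable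
      fun _ hz => revStar_eval_ne_zero hdeg hzeros hz, mul_zero, mul_zero]

/-- Erdélyi et al.: if `P` has degree `n` with all zeros in `𝔻` and
`dμ = c dθ/(2π|P(e^{iθ})|²)` is a probability measure, then `⟨z^j, P⟩_{L²(dμ)} = 0`
for all integers `j < n`. -/
theorem stmt10 (n : ℕ) (P : Polynomial ℂ) (hdeg : P.degree = n)
    (hzeros : ∀ z : ℂ, P.eval z = 0 → ‖z‖ < 1) (c : ℝ) (hc : 0 < c)
    (hnorm : ∫ θ in (0:ℝ)..(2 * Real.pi),
        c / (2 * Real.pi * ‖P.eval (Complex.exp (Complex.I * θ))‖ ^ 2) = 1) :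
    ∀ j : ℤ, j < (n : ℤ) →
      (∫ θ in (0:ℝ)..(2 * Real.pi),
          Complex.exp (-Complex.I * (j : ℂ) * (θ : ℂ)) * P.eval (Complex.exp (Complex.I * θ)) *
            ((c : ℂ) / (2 * Real.pi * (‖P.eval (Complex.exp (Complex.I * θ))‖ : ℂ) ^ 2))) = 0 :=
  stmt10_general n P hdeg hzeros c

end
end
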